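/- arXiv:1812.06675 — 6 statements merged into one kernel-verified Lean document; each statement's English description precedes it below -/
import Mathlib

section
/- Let (X,d) be a metric space and μ a Borel measure on X, finite and positive on balls; write V(x,r)=μ(B(x,r)). Fix m≥2, D≥1 and κ∈[0,m/(m−1)), and assume condition (II.2): V(x,τr) ≤ D τ^D V(x,r) exp(τ^κ + r^κ) for all x∈X, τ≥1, r>0. Then for every η>0 there exists a constant C>0 (depending only on η, m, D, κ) such that for all y∈X, all r≥0 and all t∈(0,1], ∫_{X∖B(y,r)} exp(−η (d(x,y)^m/t)^{1/(m−1)}) dμ(x) ≤ C · V(y, t^{1/m}) · exp(−(η/2)(r^m/t)^{1/(m−1)}). -/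
open MeasureTheory Metric Real

lemma young_aux {p q ε : ℝ} (hq : 0 ≤ q) (hqp : q < p) (hε : 0 < ε) :
    ∃ K : ℝ, 0 ≤ K ∧ ∀ b : ℝ, 0 ≤ b → b ^ q ≤ ε * b ^ p + K := by
  set M : ℝ := max 1 (ε⁻¹ ^ (1 / (p - q))) with hM
  have hM1 : 1 ≤ M := le_max_left _ _
  have hM0 : 0 < M := lt_of_lt_of_le one_pos hM1
  refine ⟨M ^ q, Real.rpow_nonneg hM0.le q, fun b hb => ?_⟩
  rcases le_or_gt b M with h | h
  · have h1 : b ^ q ≤ M ^ q := Real.rpow_le_rpow hb h hq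
    have h2 : 0 ≤ ε * b ^ p := mul_nonneg hε.le (Real.rpow_nonneg hb p)
    linarith
  · have hb1 : 1 ≤ b := hM1.trans h.le
    have hb0 : 0 < b := lt_of_lt_of_le one_pos hb1
    have hpq : 0 < p - q := by linarith
    have hεinv : ε⁻¹ ≤ b ^ (p - q) := by
      have e1 : (ε⁻¹ ^ (1 / (p - q))) ^ (p - q) = ε⁻¹ := by
        rw [← Real.rpow_mul (inv_nonneg.mpr hε.le), one_div,
          inv_mul_cancel₀ hpq.ne', Real.rpow_one]
      calc ε⁻¹ = (ε⁻¹ ^ (1 / (p - q))) ^ (p - q) := e1.symm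
        _ ≤ M ^ (p - q) := Real.rpow_le_rpow (Real.rpow_nonneg (inv_nonneg.mpr hε.le) _) (le_max_right _ _) hpq.le
        _ ≤ b ^ (p - q) := Real.rpow_le_rpow hM0.le h.le hpq.le
    have key : b ^ q ≤ ε * b ^ p := by
      have h2 : ε⁻¹ * b ^ q ≤ b ^ (p - q) * b ^ q :=
        mul_le_mul_of_nonneg_right hεinv (Real.rpow_nonneg hb0.le q)
      rw [← Real.rpow_add hb0] at h2
      have h3 : p - q + q = p := by ring
      rw [h3] at h2
      calc b ^ q = ε * (ε⁻¹ * b ^ q) := by field_simp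
        _ ≤ ε * b ^ p := by nlinarith [Real.rpow_nonneg hb0.le p]
    have : 0 ≤ M ^ q := Real.rpow_nonneg hM0.le q
    linarith

lemma ak_bound {p D κ η₂ : ℝ} (hp1 : 1 < p) (hD : 1 ≤ D) (hκ0 : 0 ≤ κ) (hκp : κ < p)
    (hη : 0 < η₂) :
    ∃ C' : ℝ, 0 < C' ∧ ∀ k : ℕ,
      Real.exp (-η₂ * (k : ℝ) ^ p) * (D * ((k : ℝ) + 1) ^ D * Real.exp (((k : ℝ) + 1) ^ κ + 1))
        ≤ C' * Real.exp (-(k : ℝ)) := by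
  have hD0 : 0 < D := lt_of_lt_of_le one_pos hD
  set δ : ℝ := η₂ * (1 / 2 : ℝ) ^ p with hδdef
  have hδ0 : 0 < δ := mul_pos hη (Real.rpow_pos_of_pos one_half_pos p)
  obtain ⟨K1, hK1n, hK1⟩ := young_aux (q := 1) zero_le_one hp1
    (div_pos hδ0 (by positivity) : 0 < δ / (3 * (D + 1)))
  obtain ⟨K2, hK2n, hK2⟩ := young_aux hκ0 hκp (div_pos hδ0 (by norm_num) : 0 < δ / 3)
  refine ⟨D * Real.exp (2 + δ + (D + 1) * K1 + K2), by positivity, fun k => ?_⟩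
  set b : ℝ := (k : ℝ) + 1 with hbdef
  have hb1 : 1 ≤ b := by
    have := Nat.cast_nonneg (α := ℝ) k
    simp only [hbdef]; linarith
  have hb0 : 0 < b := lt_of_lt_of_le one_pos hb1
  -- (i)
  have hi : -η₂ * (k : ℝ) ^ p ≤ δ - δ * b ^ p := by
    rcases Nat.eq_zero_or_pos k with hk | hk
    · subst hk
      simp only [Nat.cast_zero, hbdef]
      rw [Real.zero_rpow (by linarith : p ≠ 0)]
      norm_num
    · have hk1 : (1 : ℝ) ≤ (k : ℝ) := by exact_mod_cast hk
      have hbk : b ≤ 2 * (k : ℝ) := by simp [hbdef]; linarith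
      have h2 : b ^ p ≤ (2 * (k : ℝ)) ^ p :=
        Real.rpow_le_rpow hb0.le hbk (by linarith)
      have h3 : (2 * (k : ℝ)) ^ p = 2 ^ p * (k : ℝ) ^ p :=
        Real.mul_rpow (by norm_num) (by positivity)
      have h4 : δ * (2 : ℝ) ^ p = η₂ := by
        rw [hδdef, mul_assoc, ← Real.mul_rpow (by norm_num) (by norm_num)]
        norm_num
      have h5 : δ * b ^ p ≤ η₂ * (k : ℝ) ^ p := by
        calc δ * b ^ p ≤ δ * (2 ^ p * (k : ℝ) ^ p) := by
              rw [← h3]; exact mul_le_mul_of_nonneg_left h2 hδ0.le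
          _ = η₂ * (k : ℝ) ^ p := by rw [← h4]; ring
      linarith
  -- (ii)
  have hii : b ^ D ≤ Real.exp (D * b) := by
    rw [Real.rpow_def_of_pos hb0]
    apply Real.exp_le_exp.mpr
    have := Real.log_le_sub_one_of_pos hb0
    nlinarith [Real.log_nonneg hb1]
  -- exponent inequality
  have hbeq : (k : ℝ) = b - 1 := by simp [hbdef]
  have hK1' : b ≤ δ / (3 * (D + 1)) * b ^ p + K1 := by
    have := hK1 b hb0.le; rwa [Real.rpow_one] at this
  have hK2' : b ^ κ ≤ δ / 3 * b ^ p + K2 := hK2 b hb0.le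
  have hbp : 0 ≤ b ^ p := Real.rpow_nonneg hb0.le p
  have hexp : (-η₂ * (k : ℝ) ^ p) + (D * b) + (b ^ κ + 1) ≤
      (2 + δ + (D + 1) * K1 + K2) + (-(k : ℝ)) := by
    have h6 : (D + 1) * b ≤ δ / 3 * b ^ p + (D + 1) * K1 := by
      calc (D + 1) * b ≤ (D + 1) * (δ / (3 * (D + 1)) * b ^ p + K1) :=
            mul_le_mul_of_nonneg_left hK1' (by positivity)
        _ = δ / 3 * b ^ p + (D + 1) * K1 := by field_simp
    clear_value b; subst hbdef; nlinarith [hi, h6, hK2', mul_nonneg hδ0.le hbp]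
  calc Real.exp (-η₂ * (k : ℝ) ^ p) * (D * b ^ D * Real.exp (b ^ κ + 1))
      ≤ Real.exp (-η₂ * (k : ℝ) ^ p) * (D * Real.exp (D * b) * Real.exp (b ^ κ + 1)) := by
        have h7 : D * b ^ D ≤ D * Real.exp (D * b) := mul_le_mul_of_nonneg_left hii hD0.le
        have h8 : 0 ≤ Real.exp (b ^ κ + 1) := (Real.exp_pos _).le
        have h9 : 0 ≤ Real.exp (-η₂ * (k:ℝ) ^ p) := (Real.exp_pos _).le
        nlinarith [mul_le_mul_of_nonneg_right h7 h8]
    _ = D * Real.exp ((-η₂ * (k : ℝ) ^ p) + (D * b) + (b ^ κ + 1)) := by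
        simp only [Real.exp_add]; ring
    _ ≤ D * Real.exp ((2 + δ + (D + 1) * K1 + K2) + (-(k : ℝ))) :=
        mul_le_mul_of_nonneg_left (Real.exp_le_exp.mpr hexp) hD0.le
    _ = D * Real.exp (2 + δ + (D + 1) * K1 + K2) * Real.exp (-(k : ℝ)) := by
        rw [Real.exp_add]; ring

/-- Lemma 3.1 of the paper, short-time case `t ∈ (0,1]`: off-ball integral estimate
under the generalized volume doubling condition (II.2). -/
theorem stmt_0
    {X : Type*} [MetricSpace X] [MeasurableSpace X] [BorelSpace X]
    (μ : Measure X)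
    (hμ : ∀ (x : X) (r : ℝ), 0 < r → 0 < μ (ball x r) ∧ μ (ball x r) < ⊤)
    (m D κ : ℝ) (hm : 2 ≤ m) (hD : 1 ≤ D) (hκ0 : 0 ≤ κ) (hκ : κ < m / (m - 1))
    (hVD : ∀ (x : X) (τ r : ℝ), 1 ≤ τ → 0 < r →
      μ (ball x (τ * r)) ≤
        ENNReal.ofReal (D * τ ^ D * Real.exp (τ ^ κ + r ^ κ)) * μ (ball x r))
    (η : ℝ) (hη : 0 < η) :
    ∃ C : ℝ, 0 < C ∧ ∀ (y : X) (r t : ℝ), 0 ≤ r → 0 < t → t ≤ 1 →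
      (∫⁻ x in (ball y r)ᶜ,
          ENNReal.ofReal (Real.exp (-η * (dist x y ^ m / t) ^ (1 / (m - 1)))) ∂μ) ≤
        ENNReal.ofReal (C * Real.exp (-(η / 2) * (r ^ m / t) ^ (1 / (m - 1)))) *
          μ (ball y (t ^ (1 / m))) := by
  have hm1' : (0 : ℝ) < m - 1 := by linarith
  have hm0 : (0 : ℝ) < m := by linarith
  set p : ℝ := m / (m - 1) with hpdef
  have hp1 : 1 < p := (one_lt_div hm1').mpr (by linarith)
  have hmp : m * (1 / (m - 1)) = p := by rw [hpdef]; field_simp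
  have he1 : (0 : ℝ) < 1 / (m - 1) := by positivity
  set η₂ : ℝ := η / 2 with hη₂def
  have hη₂ : 0 < η₂ := by positivity
  obtain ⟨C', hC'0, hC'⟩ := ak_bound hp1 hD hκ0 hκ hη₂
  refine ⟨2 * C', by positivity, fun y r t hr ht ht1 => ?_⟩
  set s : ℝ := t ^ (1 / m) with hsdef
  have hs0 : 0 < s := Real.rpow_pos_of_pos ht _
  have hs1 : s ≤ 1 := Real.rpow_le_one ht.le ht1 (by positivity)
  have hsm : s ^ m = t := by
    rw [hsdef, ← Real.rpow_mul ht.le, one_div, inv_mul_cancel₀ hm0.ne', Real.rpow_one]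
  set g : X → ENNReal :=
    fun x => ENNReal.ofReal (Real.exp (-η₂ * (dist x y ^ m / t) ^ (1 / (m - 1)))) with hg
  have hgmeas : Measurable g := by
    have hc : Continuous fun x : X => (dist x y ^ m / t) ^ (1 / (m - 1)) := by
      apply Continuous.rpow_const
      · exact ((Continuous.dist continuous_id continuous_const).rpow_const
          (fun x => Or.inr hm0.le)).div_const t
      · exact fun x => Or.inr he1.le
    exact (ENNReal.continuous_ofReal.comp
      (Real.continuous_exp.comp (continuous_const.mul hc))).measurable
  -- full space estimate
  have key : (∫⁻ x, g x ∂μ) ≤ ENNReal.ofReal (2 * C') * μ (ball y s) := by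
    have hU : (⋃ k : ℕ, (ball y (((k : ℝ) + 1) * s) \ ball y ((k : ℝ) * s))) = Set.univ := by
      ext x
      simp only [Set.mem_iUnion, Set.mem_univ, iff_true, Set.mem_diff, mem_ball, not_lt]
      refine ⟨⌊dist x y / s⌋₊, ?_, ?_⟩
      · have h := Nat.lt_floor_add_one (dist x y / s)
        calc dist x y = dist x y / s * s := by field_simp
          _ < ((⌊dist x y / s⌋₊ : ℝ) + 1) * s := mul_lt_mul_of_pos_right h hs0
      · have h := Nat.floor_le (div_nonneg (dist_nonneg : (0:ℝ) ≤ dist x y) hs0.le)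
        calc (⌊dist x y / s⌋₊ : ℝ) * s ≤ dist x y / s * s := mul_le_mul_of_nonneg_right h hs0.le
          _ = dist x y := by field_simp
    have hAnn : ∀ k : ℕ,
        (∫⁻ x in ball y (((k : ℝ) + 1) * s) \ ball y ((k : ℝ) * s), g x ∂μ) ≤
          ENNReal.ofReal (C' * Real.exp (-(k : ℝ))) * μ (ball y s) := by
      intro k
      have hk0 : (0 : ℝ) ≤ (k : ℝ) := Nat.cast_nonneg k
      have hpt : ∀ x ∈ ball y (((k : ℝ) + 1) * s) \ ball y ((k : ℝ) * s),
          g x ≤ ENNReal.ofReal (Real.exp (-η₂ * (k : ℝ) ^ p)) := by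
        intro x hx
        have hd : (k : ℝ) * s ≤ dist x y := by
          have := hx.2
          simpa [mem_ball, not_lt] using this
        have h1 : ((k : ℝ) * s) ^ m ≤ dist x y ^ m :=
          Real.rpow_le_rpow (by positivity) hd hm0.le
        have h2 : ((k : ℝ) * s) ^ m = (k : ℝ) ^ m * t := by
          rw [Real.mul_rpow hk0 hs0.le, hsm]
        have h3 : (k : ℝ) ^ m ≤ dist x y ^ m / t := by
          rw [le_div_iff₀ ht]; linarith
        have h4 : ((k : ℝ) ^ m) ^ (1 / (m - 1)) ≤ (dist x y ^ m / t) ^ (1 / (m - 1)) :=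
          Real.rpow_le_rpow (by positivity) h3 he1.le
        have h5 : ((k : ℝ) ^ m) ^ (1 / (m - 1)) = (k : ℝ) ^ p := by
          rw [← Real.rpow_mul hk0, hmp]
        rw [h5] at h4
        apply ENNReal.ofReal_le_ofReal
        apply Real.exp_le_exp.mpr
        nlinarith [h4, hη₂.le]
      calc (∫⁻ x in ball y (((k : ℝ) + 1) * s) \ ball y ((k : ℝ) * s), g x ∂μ)
          ≤ ∫⁻ _x in ball y (((k : ℝ) + 1) * s) \ ball y ((k : ℝ) * s),
              ENNReal.ofReal (Real.exp (-η₂ * (k : ℝ) ^ p)) ∂μ :=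
            setLIntegral_mono measurable_const hpt
        _ = ENNReal.ofReal (Real.exp (-η₂ * (k : ℝ) ^ p)) *
              μ (ball y (((k : ℝ) + 1) * s) \ ball y ((k : ℝ) * s)) := setLIntegral_const _ _
        _ ≤ ENNReal.ofReal (Real.exp (-η₂ * (k : ℝ) ^ p)) *
              (ENNReal.ofReal (D * ((k : ℝ) + 1) ^ D *
                Real.exp (((k : ℝ) + 1) ^ κ + s ^ κ)) * μ (ball y s)) := by
            apply mul_le_mul_right
            calc μ (ball y (((k : ℝ) + 1) * s) \ ball y ((k : ℝ) * s))
                ≤ μ (ball y (((k : ℝ) + 1) * s)) := measure_mono Set.diff_subset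
              _ ≤ _ := hVD y ((k : ℝ) + 1) s (by linarith) hs0
        _ ≤ ENNReal.ofReal (C' * Real.exp (-(k : ℝ))) * μ (ball y s) := by
            rw [← mul_assoc, ← ENNReal.ofReal_mul (Real.exp_nonneg _)]
            apply mul_le_mul_left
            apply ENNReal.ofReal_le_ofReal
            have hsκ : s ^ κ ≤ 1 := Real.rpow_le_one hs0.le hs1 hκ0
            have hmono : Real.exp (((k : ℝ) + 1) ^ κ + s ^ κ) ≤
                Real.exp (((k : ℝ) + 1) ^ κ + 1) := Real.exp_le_exp.mpr (by linarith)
            have hb : (0 : ℝ) ≤ D * ((k : ℝ) + 1) ^ D := by positivity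
            calc Real.exp (-η₂ * (k : ℝ) ^ p) *
                  (D * ((k : ℝ) + 1) ^ D * Real.exp (((k : ℝ) + 1) ^ κ + s ^ κ))
                ≤ Real.exp (-η₂ * (k : ℝ) ^ p) *
                  (D * ((k : ℝ) + 1) ^ D * Real.exp (((k : ℝ) + 1) ^ κ + 1)) := by
                  apply mul_le_mul_of_nonneg_left _ (Real.exp_nonneg _)
                  exact mul_le_mul_of_nonneg_left hmono hb
              _ ≤ C' * Real.exp (-(k : ℝ)) := hC' k
    calc (∫⁻ x, g x ∂μ)
        = ∫⁻ x in ⋃ k : ℕ, (ball y (((k : ℝ) + 1) * s) \ ball y ((k : ℝ) * s)), g x ∂μ := by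
          rw [hU, setLIntegral_univ]
      _ ≤ ∑' k : ℕ, ∫⁻ x in ball y (((k : ℝ) + 1) * s) \ ball y ((k : ℝ) * s), g x ∂μ :=
          lintegral_iUnion_le _ _
      _ ≤ ∑' k : ℕ, ENNReal.ofReal (C' * Real.exp (-(k : ℝ))) * μ (ball y s) :=
          ENNReal.tsum_le_tsum hAnn
      _ = (∑' k : ℕ, ENNReal.ofReal (C' * Real.exp (-(k : ℝ)))) * μ (ball y s) :=
          ENNReal.tsum_mul_right
      _ ≤ ENNReal.ofReal (2 * C') * μ (ball y s) := by
          apply mul_le_mul_left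
          have h1 : ∀ k : ℕ, ENNReal.ofReal (C' * Real.exp (-(k : ℝ))) =
              ENNReal.ofReal C' * (ENNReal.ofReal (Real.exp (-1))) ^ k := by
            intro k
            rw [ENNReal.ofReal_mul hC'0.le,
              show Real.exp (-(k : ℝ)) = Real.exp (-1) ^ k by
                rw [← Real.exp_nat_mul]; norm_num,
              ENNReal.ofReal_pow (Real.exp_nonneg _)]
          have hr : ENNReal.ofReal (Real.exp (-1)) ≤ 2⁻¹ := by
            have h2 : (2 : ℝ) ≤ Real.exp 1 := by linarith [Real.add_one_le_exp 1]
            have h3 : Real.exp (-1) ≤ 1 / 2 := by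
              rw [Real.exp_neg]
              rw [inv_le_comm₀ (Real.exp_pos 1) (by norm_num)]
              linarith
            calc ENNReal.ofReal (Real.exp (-1)) ≤ ENNReal.ofReal (1 / 2) :=
                ENNReal.ofReal_le_ofReal h3
              _ = 2⁻¹ := by norm_num [ENNReal.ofReal_div_of_pos]
          calc (∑' k : ℕ, ENNReal.ofReal (C' * Real.exp (-(k : ℝ))))
              = ENNReal.ofReal C' * ∑' k : ℕ, (ENNReal.ofReal (Real.exp (-1))) ^ k := by
                simp_rw [h1]; rw [ENNReal.tsum_mul_left]
            _ ≤ ENNReal.ofReal C' * 2 := by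
                apply mul_le_mul_right
                rw [ENNReal.tsum_geometric]
                calc (1 - ENNReal.ofReal (Real.exp (-1)))⁻¹
                    ≤ ((1 : ENNReal) - 2⁻¹)⁻¹ := ENNReal.inv_le_inv' (tsub_le_tsub le_rfl hr)
                  _ = 2 := by norm_num
            _ = ENNReal.ofReal (2 * C') := by
                rw [ENNReal.ofReal_mul (by norm_num : (0:ℝ) ≤ 2), ENNReal.ofReal_ofNat]
                ring
  -- pointwise split on the complement of the ball
  set R : ℝ := (r ^ m / t) ^ (1 / (m - 1)) with hRdef
  have hR0 : 0 ≤ R := Real.rpow_nonneg (by positivity) _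
  have hptw : ∀ x ∈ (ball y r)ᶜ,
      ENNReal.ofReal (Real.exp (-η * (dist x y ^ m / t) ^ (1 / (m - 1)))) ≤
        ENNReal.ofReal (Real.exp (-η₂ * R)) * g x := by
    intro x hx
    have hd : r ≤ dist x y := by simpa [mem_ball, not_lt] using hx
    have h1 : r ^ m ≤ dist x y ^ m := Real.rpow_le_rpow hr hd hm0.le
    have h3 : R ≤ (dist x y ^ m / t) ^ (1 / (m - 1)) := by
      rw [hRdef]
      apply Real.rpow_le_rpow (by positivity) _ he1.le
      gcongr
    rw [hg, ← ENNReal.ofReal_mul (Real.exp_nonneg _), ← Real.exp_add]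
    apply ENNReal.ofReal_le_ofReal
    apply Real.exp_le_exp.mpr
    have h6 := mul_le_mul_of_nonneg_left h3 hη₂.le
    have h7 : η = 2 * η₂ := by rw [hη₂def]; ring
    nlinarith [h6]
  calc (∫⁻ x in (ball y r)ᶜ,
        ENNReal.ofReal (Real.exp (-η * (dist x y ^ m / t) ^ (1 / (m - 1)))) ∂μ)
      ≤ ∫⁻ x in (ball y r)ᶜ, ENNReal.ofReal (Real.exp (-η₂ * R)) * g x ∂μ :=
        setLIntegral_mono (measurable_const.mul hgmeas) hptw
    _ = ENNReal.ofReal (Real.exp (-η₂ * R)) * ∫⁻ x in (ball y r)ᶜ, g x ∂μ :=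
        lintegral_const_mul' _ _ ENNReal.ofReal_ne_top
    _ ≤ ENNReal.ofReal (Real.exp (-η₂ * R)) * ∫⁻ x, g x ∂μ :=
        mul_le_mul_right (setLIntegral_le_lintegral _ _) _
    _ ≤ ENNReal.ofReal (Real.exp (-η₂ * R)) * (ENNReal.ofReal (2 * C') * μ (ball y s)) :=
        mul_le_mul_right key _
    _ = ENNReal.ofReal (2 * C' * Real.exp (-η₂ * R)) * μ (ball y s) := by
        rw [← mul_assoc, ← ENNReal.ofReal_mul (Real.exp_nonneg _), mul_comm (Real.exp _)]
end

section
/- Let (X,d) be a metric space and μ a Borel measure on X, finite and positive on balls; write V(x,r)=μ(B(x,r)). Fix m≥2, D≥1 and κ∈[0,m/(m−1)), and assume condition (II.2): V(x,τr) ≤ D τ^D V(x,r) exp(τ^κ + r^κ) for all x∈X, τ≥1, r>0. Let p:(0,∞)×X×X→[0,∞) be measurable and satisfy the short-time bound (II.3): there are A,c>0 with p_t(x,y) ≤ A·V(x,t^{1/m})^{−1}·exp(−c(d(x,y)^m/t)^{1/(m−1)}) for all t∈(0,1], x,y∈X. Then for every γ with 0<γ<2c there is a constant C>0 such that for all t∈(0,1]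 and x∈X, ∫_X p_t(x,z)² · exp(γ(d(x,z)^m/t)^{1/(m−1)}) dμ(z) ≤ C / V(x, t^{1/m}). -/
open MeasureTheory Metric Real

lemma aux_absorb {κ β δ : ℝ} (hκ : 0 ≤ κ) (hβ : κ < β) (hδ : 0 < δ) :
    ∃ M : ℝ, 1 ≤ M ∧ ∀ x : ℝ, 1 ≤ x → x ^ κ ≤ δ * x ^ β + M := by
  set R : ℝ := max 1 ((1/δ) ^ (1/(β-κ))) with hR
  have hR1 : 1 ≤ R := le_max_left _ _
  have hR0 : 0 < R := lt_of_lt_of_le one_pos hR1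
  refine ⟨max 1 (R ^ κ), le_max_left _ _, ?_⟩
  intro x hx
  have hx0 : 0 < x := lt_of_lt_of_le one_pos hx
  rcases le_or_gt x R with h | h
  · have h1 : x ^ κ ≤ R ^ κ := Real.rpow_le_rpow (le_of_lt hx0) h hκ
    have h2 : (0:ℝ) ≤ δ * x ^ β := by positivity
    calc x ^ κ ≤ R ^ κ := h1
      _ ≤ max 1 (R ^ κ) := le_max_right _ _
      _ ≤ δ * x ^ β + max 1 (R ^ κ) := by linarith
  · have hβκ : 0 < β - κ := by linarith
    have h1 : (1/δ) ^ (1/(β-κ)) ≤ R := le_max_right _ _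
    have h2 : (1/δ) ≤ R ^ (β - κ) := by
      have h2' := Real.rpow_le_rpow (by positivity) h1 (le_of_lt hβκ)
      rwa [← Real.rpow_mul (by positivity), one_div (β - κ),
        inv_mul_cancel₀ (ne_of_gt hβκ), Real.rpow_one] at h2'
    have h3 : R ^ (β - κ) ≤ x ^ (β - κ) :=
      Real.rpow_le_rpow (le_of_lt hR0) (le_of_lt h) (le_of_lt hβκ)
    have h4 : 1/δ ≤ x ^ (β - κ) := le_trans h2 h3
    have h5 : x ^ κ * (1/δ) ≤ x ^ κ * x ^ (β - κ) :=
      mul_le_mul_of_nonneg_left h4 (by positivity)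
    rw [← Real.rpow_add hx0] at h5
    have h6 : κ + (β - κ) = β := by ring
    rw [h6] at h5
    have h7 := mul_le_mul_of_nonneg_left h5 (le_of_lt hδ)
    have h8 : δ * (x ^ κ * (1/δ)) = x ^ κ := by field_simp
    rw [h8] at h7
    have h9 : (0:ℝ) ≤ max 1 (R^κ) := le_trans zero_le_one (le_max_left _ _)
    linarith

lemma aux_summable {κ β ε D : ℝ} (hκ : 0 ≤ κ) (hβκ : κ < β) (hβ1 : 1 ≤ β)
    (hβ2 : β ≤ 2) (hε : 0 < ε) (hD : 1 ≤ D) :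
    Summable (fun k : ℕ =>
      Real.exp (-ε * (k:ℝ) ^ β) * (D * ((k:ℝ)+1) ^ D * Real.exp (((k:ℝ)+1) ^ κ + 1))) := by
  obtain ⟨M, hM1, hM⟩ := aux_absorb hκ hβκ (by positivity : (0:ℝ) < ε/8)
  have key : ∀ k : ℕ, ((k:ℝ)+1) ^ κ - ε * (k:ℝ) ^ β ≤ (M + ε/8) - (ε/2) * k := by
    intro k
    have hk1 : (1:ℝ) ≤ (k:ℝ) + 1 := by linarith [Nat.cast_nonneg (α := ℝ) k]
    have h1 := hM ((k:ℝ)+1) hk1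
    rcases Nat.eq_zero_or_pos k with hk | hk
    · subst hk; simp at h1 ⊢
      rw [Real.zero_rpow (by linarith : β ≠ 0)]
      linarith
    · have hk1' : (1:ℝ) ≤ (k:ℝ) := by exact_mod_cast hk
      have hkpos : (0:ℝ) < k := by linarith
      have h2 : ((k:ℝ)+1) ^ β ≤ ((2:ℝ)*k) ^ β :=
        Real.rpow_le_rpow (by positivity) (by linarith) (by linarith)
      have h3 : ((2:ℝ)*k) ^ β = (2:ℝ)^β * (k:ℝ)^β := Real.mul_rpow (by norm_num) hkpos.le
      have h4 : (2:ℝ)^β ≤ (2:ℝ)^(2:ℝ) := Real.rpow_le_rpow_of_exponent_le (by norm_num) hβ2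
      have h5 : (2:ℝ)^(2:ℝ) = 4 := by
        rw [show (2:ℝ) = ((2:ℕ):ℝ) by norm_num, Real.rpow_natCast]; norm_num
      have h6 : ((k:ℝ)+1) ^ β ≤ 4 * (k:ℝ)^β := by
        have hkb : (0:ℝ) ≤ (k:ℝ)^β := by positivity
        calc ((k:ℝ)+1) ^ β ≤ (2:ℝ)^β * (k:ℝ)^β := by rw [← h3]; exact h2
          _ ≤ 4 * (k:ℝ)^β := by nlinarith
      have h7 : (k:ℝ) ≤ (k:ℝ)^β := by
        calc (k:ℝ) = (k:ℝ)^(1:ℝ) := (Real.rpow_one _).symm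
          _ ≤ (k:ℝ)^β := Real.rpow_le_rpow_of_exponent_le hk1' hβ1
      nlinarith
  set q : ℝ := Real.exp (-(ε/2)) with hq
  have hq1 : q < 1 := Real.exp_lt_one_iff.mpr (by linarith)
  have hq0 : 0 < q := Real.exp_pos _
  set n : ℕ := ⌈D⌉₊ with hn
  have hsum : Summable (fun k : ℕ => ((k:ℝ))^n * q^k) :=
    summable_pow_mul_geometric_of_norm_lt_one n (by rw [Real.norm_eq_abs, abs_of_pos hq0]; exact hq1)
  have hsum2 : Summable (fun k : ℕ => (((k:ℝ))+1)^n * q^(k+1)) := by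
    have := (summable_nat_add_iff 1).mpr hsum
    simpa using this
  have hsum3 : Summable (fun k : ℕ => (D * Real.exp (M + ε/8 + 1) / q) * ((((k:ℝ)+1))^n * q^(k+1))) :=
    hsum2.mul_left _
  refine Summable.of_nonneg_of_le ?_ ?_ hsum3
  · intro k
    have : (0:ℝ) < (k:ℝ) + 1 := by positivity
    positivity
  · intro k
    have hk0 : (0:ℝ) < (k:ℝ) + 1 := by positivity
    have hk1 : (1:ℝ) ≤ (k:ℝ) + 1 := by linarith [Nat.cast_nonneg (α := ℝ) k]
    have hDn : ((k:ℝ)+1) ^ D ≤ ((k:ℝ)+1) ^ (n:ℕ) := by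
      rw [← Real.rpow_natCast ((k:ℝ)+1) n]
      exact Real.rpow_le_rpow_of_exponent_le hk1 (Nat.le_ceil D)
    have hDpos : (0:ℝ) < ((k:ℝ)+1) ^ D := Real.rpow_pos_of_pos hk0 _
    have hexp : Real.exp ((((k:ℝ)+1) ^ κ + 1) + -ε * (k:ℝ)^β) ≤ Real.exp (M + ε/8 + 1) * q^k := by
      rw [hq, ← Real.exp_nat_mul, ← Real.exp_add]
      apply Real.exp_le_exp.mpr
      have hkey := key k
      nlinarith [key k]
    calc Real.exp (-ε * (k:ℝ) ^ β) * (D * ((k:ℝ)+1) ^ D * Real.exp (((k:ℝ)+1) ^ κ + 1))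
        = D * ((k:ℝ)+1) ^ D * (Real.exp (((k:ℝ)+1) ^ κ + 1) * Real.exp (-ε * (k:ℝ)^β)) := by
          ring
      _ = D * ((k:ℝ)+1) ^ D * Real.exp ((((k:ℝ)+1) ^ κ + 1) + -ε * (k:ℝ)^β) := by
          rw [← Real.exp_add]
      _ ≤ D * ((k:ℝ)+1) ^ (n:ℕ) * (Real.exp (M + ε/8 + 1) * q^k) := by
          apply mul_le_mul (mul_le_mul_of_nonneg_left hDn (by linarith)) hexp
            (Real.exp_pos _).le (by positivity)
      _ = (D * Real.exp (M + ε/8 + 1) / q) * ((((k:ℝ)+1))^n * q^(k+1)) := by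
          field_simp; ring

/-- The estimate `N_γ(x,t) ≲ 1 / V(x, t^{1/m})` for `t ∈ (0,1]` and `0 < γ < 2c`,
from the proof of Lemma 3.2 (using (II.2), (II.3) and Lemma 3.1 with `r = 0`). -/
theorem stmt_6
    {X : Type*} [MetricSpace X] [MeasurableSpace X] [BorelSpace X]
    (μ : Measure X)
    (hμ : ∀ (x : X) (r : ℝ), 0 < r → 0 < μ (ball x r) ∧ μ (ball x r) < ⊤)
    (m D κ : ℝ) (hm : 2 ≤ m) (hD : 1 ≤ D) (hκ0 : 0 ≤ κ) (hκ : κ < m / (m - 1))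
    (hVD : ∀ (x : X) (τ r : ℝ), 1 ≤ τ → 0 < r →
      μ (ball x (τ * r)) ≤
        ENNReal.ofReal (D * τ ^ D * Real.exp (τ ^ κ + r ^ κ)) * μ (ball x r))
    (p : ℝ → X → X → ℝ)
    (hp_nonneg : ∀ (t : ℝ) (x y : X), 0 < t → 0 ≤ p t x y)
    (hp_meas : Measurable fun q : ℝ × X × X => p q.1 q.2.1 q.2.2)
    (A c : ℝ) (hA : 0 < A) (hc : 0 < c)
    (hUB : ∀ (t : ℝ) (x y : X), 0 < t → t ≤ 1 →
      p t x y ≤ A * Real.exp (-c * (dist x y ^ m / t) ^ (1 / (m - 1))) /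
        (μ (ball x (t ^ (1 / m)))).toReal) :
    ∀ γ : ℝ, 0 < γ → γ < 2 * c →
      ∃ C : ℝ, 0 < C ∧ ∀ (t : ℝ) (x : X), 0 < t → t ≤ 1 →
        (∫⁻ z, ENNReal.ofReal
            (p t x z ^ 2 * Real.exp (γ * (dist x z ^ m / t) ^ (1 / (m - 1)))) ∂μ) ≤
          ENNReal.ofReal C / μ (ball x (t ^ (1 / m))) := by
  intro γ hγ0 hγc
  have hm1 : (0:ℝ) < m - 1 := by linarith
  have hm0 : (0:ℝ) < m := by linarith
  set β : ℝ := m / (m - 1) with hβdef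
  have hβ1 : 1 ≤ β := by
    rw [hβdef, le_div_iff₀ hm1]; linarith
  have hβ2 : β ≤ 2 := by
    rw [hβdef, div_le_iff₀ hm1]; linarith
  set ε : ℝ := 2*c - γ with hεdef
  have hε : 0 < ε := by simp only [hεdef]; linarith
  have hsum := aux_summable hκ0 hκ hβ1 hβ2 hε hD
  set g : ℕ → ℝ := fun k =>
    Real.exp (-ε * (k:ℝ) ^ β) * (D * ((k:ℝ)+1) ^ D * Real.exp (((k:ℝ)+1) ^ κ + 1)) with hgdef
  have hg_nonneg : ∀ k, 0 ≤ g k := by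
    intro k
    have : (0:ℝ) < (k:ℝ) + 1 := by positivity
    positivity
  set S : ℝ := ∑' k, g k with hSdef
  have hS0 : 0 < S := by
    have h0 : 0 < g 0 := by
      simp only [hgdef]
      have : (0:ℝ) < (0:ℝ) + 1 := by norm_num
      positivity
    have := Summable.le_tsum hsum 0 (fun i _ => hg_nonneg i)
    linarith
  refine ⟨A^2 * S, by positivity, ?_⟩
  intro t x ht0 ht1
  set r : ℝ := t ^ (1/m) with hrdef
  have hr0 : 0 < r := Real.rpow_pos_of_pos ht0 _
  have hr1 : r ≤ 1 := Real.rpow_le_one ht0.le ht1 (by positivity)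
  obtain ⟨hμ0, hμt⟩ := hμ x r hr0
  set V : ℝ := (μ (ball x r)).toReal with hVdef
  have hV0 : 0 < V := ENNReal.toReal_pos hμ0.ne' hμt.ne
  have hμV : μ (ball x r) = ENNReal.ofReal V := (ENNReal.ofReal_toReal hμt.ne).symm
  have hrm : r ^ m = t := by
    rw [hrdef, ← Real.rpow_mul ht0.le, one_div, inv_mul_cancel₀ hm0.ne', Real.rpow_one]
  set ρ : X → ℝ := fun z => (dist x z ^ m / t) ^ (1/(m-1)) with hρdef
  have hρ0 : ∀ z, 0 ≤ ρ z := by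
    intro z
    apply Real.rpow_nonneg
    apply div_nonneg (Real.rpow_nonneg dist_nonneg _) ht0.le
  -- Step 1: pointwise bound on integrand
  have step1 : ∀ z, ENNReal.ofReal (p t x z ^ 2 * Real.exp (γ * ρ z)) ≤
      ENNReal.ofReal ((A^2/V^2) * Real.exp (-ε * ρ z)) := by
    intro z
    apply ENNReal.ofReal_le_ofReal
    have hp := hUB t x z ht0 ht1
    have hpn := hp_nonneg t x z ht0
    have hsq : p t x z ^ 2 ≤ (A * Real.exp (-c * ρ z) / V)^2 := by
      apply pow_le_pow_left₀ hpn
      exact hp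
    have e1 : (A * Real.exp (-c * ρ z) / V)^2 * Real.exp (γ * ρ z)
        = (A^2/V^2) * Real.exp (-ε * ρ z) := by
      have h2 : Real.exp (-c * ρ z) ^ 2 = Real.exp (-c * ρ z + -c * ρ z) := by
        rw [Real.exp_add]; ring
      rw [div_pow, mul_pow, h2]
      rw [show (A^2 * Real.exp (-c * ρ z + -c * ρ z) / V^2) * Real.exp (γ * ρ z)
          = (A^2/V^2) * (Real.exp (-c * ρ z + -c * ρ z) * Real.exp (γ * ρ z)) from by ring]
      rw [← Real.exp_add]
      congr 1
      rw [hεdef]; ring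
    calc p t x z ^ 2 * Real.exp (γ * ρ z)
        ≤ (A * Real.exp (-c * ρ z) / V)^2 * Real.exp (γ * ρ z) :=
          mul_le_mul_of_nonneg_right hsq (Real.exp_pos _).le
      _ = (A^2/V^2) * Real.exp (-ε * ρ z) := e1
  -- Step 2: off-ball estimate (Lemma 3.1 with r = 0)
  set s : ℕ → Set X := fun k => ball x (((k:ℝ)+1)*r) \ ball x ((k:ℝ)*r) with hsdef
  have hcover : (Set.univ : Set X) = ⋃ k, s k := by
    ext z
    simp only [Set.mem_univ, Set.mem_iUnion, true_iff]
    refine ⟨⌊dist z x / r⌋₊, ?_, ?_⟩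
    · rw [mem_ball]
      have h1 := Nat.lt_floor_add_one (dist z x / r)
      calc dist z x = (dist z x / r) * r := by field_simp
        _ < ((⌊dist z x / r⌋₊ : ℝ) + 1) * r := by
            apply mul_lt_mul_of_pos_right h1 hr0
    · rw [mem_ball, not_lt]
      have h1 := Nat.floor_le (div_nonneg (dist_nonneg : (0:ℝ) ≤ dist z x) hr0.le)
      calc (⌊dist z x / r⌋₊ : ℝ) * r ≤ (dist z x / r) * r :=
            mul_le_mul_of_nonneg_right h1 hr0.le
        _ = dist z x := by field_simp
  have perk : ∀ k : ℕ, (∫⁻ z in s k, ENNReal.ofReal (Real.exp (-ε * ρ z)) ∂μ) ≤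
      ENNReal.ofReal (g k) * μ (ball x r) := by
    intro k
    have hbound : ∀ z ∈ s k, ENNReal.ofReal (Real.exp (-ε * ρ z)) ≤
        ENNReal.ofReal (Real.exp (-ε * (k:ℝ)^β)) := by
      intro z hz
      obtain ⟨_, hz2⟩ := hz
      simp only [mem_ball, not_lt] at hz2
      have hkr : (k:ℝ)*r ≤ dist x z := by rw [dist_comm]; exact hz2
      have hkn : (0:ℝ) ≤ (k:ℝ) := Nat.cast_nonneg k
      have h1 : ((k:ℝ)*r)^m ≤ dist x z ^ m :=
        Real.rpow_le_rpow (by positivity) hkr hm0.le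
      have h2 : ((k:ℝ)*r)^m = (k:ℝ)^m * t := by
        rw [Real.mul_rpow hkn hr0.le, hrm]
      have h3 : (k:ℝ)^m ≤ dist x z ^ m / t := by
        rw [le_div_iff₀ ht0, ← h2]; exact h1
      have h4 : (k:ℝ)^β ≤ ρ z := by
        have h5 : ((k:ℝ)^m)^(1/(m-1)) ≤ (dist x z ^ m / t)^(1/(m-1)) :=
          Real.rpow_le_rpow (Real.rpow_nonneg hkn _) h3 (by positivity)
        rwa [← Real.rpow_mul hkn, mul_one_div, ← hβdef] at h5
      apply ENNReal.ofReal_le_ofReal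
      apply Real.exp_le_exp.mpr
      nlinarith
    have h6 : (∫⁻ z in s k, ENNReal.ofReal (Real.exp (-ε * ρ z)) ∂μ) ≤
        ENNReal.ofReal (Real.exp (-ε * (k:ℝ)^β)) * μ (s k) := by
      calc (∫⁻ z in s k, ENNReal.ofReal (Real.exp (-ε * ρ z)) ∂μ)
          ≤ ∫⁻ _ in s k, ENNReal.ofReal (Real.exp (-ε * (k:ℝ)^β)) ∂μ :=
            setLIntegral_mono measurable_const hbound
        _ = ENNReal.ofReal (Real.exp (-ε * (k:ℝ)^β)) * μ (s k) := setLIntegral_const _ _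
    have h7 : μ (s k) ≤ μ (ball x (((k:ℝ)+1)*r)) := measure_mono Set.diff_subset
    have h8 := hVD x ((k:ℝ)+1) r (by linarith [Nat.cast_nonneg (α := ℝ) k]) hr0
    have h9 : ENNReal.ofReal (D * ((k:ℝ)+1) ^ D * Real.exp (((k:ℝ)+1) ^ κ + r ^ κ)) ≤
        ENNReal.ofReal (D * ((k:ℝ)+1) ^ D * Real.exp (((k:ℝ)+1) ^ κ + 1)) := by
      apply ENNReal.ofReal_le_ofReal
      have hk0 : (0:ℝ) < (k:ℝ) + 1 := by positivity
      have hrκ : r ^ κ ≤ 1 := Real.rpow_le_one hr0.le hr1 hκ0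
      have hexp : Real.exp (((k:ℝ)+1) ^ κ + r ^ κ) ≤ Real.exp (((k:ℝ)+1) ^ κ + 1) :=
        Real.exp_le_exp.mpr (by linarith)
      have : (0:ℝ) ≤ D * ((k:ℝ)+1) ^ D := by positivity
      exact mul_le_mul_of_nonneg_left hexp this
    calc (∫⁻ z in s k, ENNReal.ofReal (Real.exp (-ε * ρ z)) ∂μ)
        ≤ ENNReal.ofReal (Real.exp (-ε * (k:ℝ)^β)) * μ (s k) := h6
      _ ≤ ENNReal.ofReal (Real.exp (-ε * (k:ℝ)^β)) *
            (ENNReal.ofReal (D * ((k:ℝ)+1) ^ D * Real.exp (((k:ℝ)+1) ^ κ + 1)) * μ (ball x r)) := by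
          apply mul_le_mul_right
          exact le_trans (le_trans h7 h8) (mul_le_mul_left h9 _)
      _ = ENNReal.ofReal (g k) * μ (ball x r) := by
          rw [← mul_assoc, ← ENNReal.ofReal_mul (Real.exp_pos _).le]
  have step2 : (∫⁻ z, ENNReal.ofReal (Real.exp (-ε * ρ z)) ∂μ) ≤
      ENNReal.ofReal S * μ (ball x r) := by
    calc (∫⁻ z, ENNReal.ofReal (Real.exp (-ε * ρ z)) ∂μ)
        = ∫⁻ z in Set.univ, ENNReal.ofReal (Real.exp (-ε * ρ z)) ∂μ :=
          (setLIntegral_univ _).symm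
      _ = ∫⁻ z in ⋃ k, s k, ENNReal.ofReal (Real.exp (-ε * ρ z)) ∂μ := by rw [← hcover]
      _ ≤ ∑' k, ∫⁻ z in s k, ENNReal.ofReal (Real.exp (-ε * ρ z)) ∂μ :=
          lintegral_iUnion_le _ _
      _ ≤ ∑' k, ENNReal.ofReal (g k) * μ (ball x r) := ENNReal.tsum_le_tsum perk
      _ = (∑' k, ENNReal.ofReal (g k)) * μ (ball x r) := ENNReal.tsum_mul_right
      _ = ENNReal.ofReal S * μ (ball x r) := by
          rw [hSdef, ENNReal.ofReal_tsum_of_nonneg hg_nonneg hsum]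
  -- Assemble
  calc (∫⁻ z, ENNReal.ofReal
          (p t x z ^ 2 * Real.exp (γ * (dist x z ^ m / t) ^ (1 / (m - 1)))) ∂μ)
      ≤ ∫⁻ z, ENNReal.ofReal ((A^2/V^2) * Real.exp (-ε * ρ z)) ∂μ :=
        lintegral_mono (fun z => step1 z)
    _ = ∫⁻ z, ENNReal.ofReal (A^2/V^2) * ENNReal.ofReal (Real.exp (-ε * ρ z)) ∂μ := by
        congr 1; ext z; rw [ENNReal.ofReal_mul (by positivity)]
    _ = ENNReal.ofReal (A^2/V^2) * ∫⁻ z, ENNReal.ofReal (Real.exp (-ε * ρ z)) ∂μ :=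
        lintegral_const_mul' _ _ ENNReal.ofReal_ne_top
    _ ≤ ENNReal.ofReal (A^2/V^2) * (ENNReal.ofReal S * μ (ball x r)) :=
        mul_le_mul_right step2 _
    _ = ENNReal.ofReal (A^2 * S) / μ (ball x r) := by
        rw [hμV, ← ENNReal.ofReal_mul (by positivity), ← ENNReal.ofReal_mul (by positivity)]
        rw [← ENNReal.ofReal_div_of_pos hV0]
        congr 1
        field_simp
end

section
/- Let (X,d) be a metric space and μ a Borel measure on X, finite and positive on balls; write V(x,r)=μ(B(x,r)). Fix m≥2, D≥1 and κ∈[0,m/(m−1)), and assume condition (II.2): V(x,τr) ≤ D τ^D V(x,r) exp(τ^κ + r^κ) for all x∈X, τ≥1, r>0. Let p:(0,∞)×X×X→[0,∞) be measurable and suppose there are constants A, c₁, c₂>0 such that p_s(y,z) ≤ A·V(y,s^{1/m})^{−1}·exp(−c₁ (d(y,z)^m/s)^{1/(m−1)} + c₂ s^{κ/m}) for all s∈(0,2] and y,z∈X. Then there exists a constant C>0 such that for every x₀∈X, every r∈(0,1], putting t=r^m and B=B(x₀,r), for every measurable f: X→[0,∞) and every y, x′ ∈ B, ∫_X p_{2t}(y,z)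 f(z) dμ(z) ≤ C · sup_{ρ>0} (1/V(x′,ρ)) ∫_{B(x′,ρ)} f dμ. -/
/-!
Cut `X` into the annuli `B(y, (k+1)r) \ B(y, kr)`. On the `k`-th annulus the Gaussian bound
gives `p_{2t}(y, ·) ≲ exp(-ε k^{m/(m-1)}) / V(y, r)`, while the annulus lies in
`B(x', (k+3)r) ⊆ B(y, (k+5)r)`, so its `f`-mass is at most
`M f(x') V(y, (k+5)r) ≲ M f(x') (k+5)^D exp((k+5)^κ) V(y, r)` by (II.2). The factors `V(y, r)`
cancel, and the resulting series `∑ (k+5)^D exp((k+5)^κ - ε k^{m/(m-1)})` converges because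
`κ < m/(m-1)`.
-/
open MeasureTheory Metric Real Filter
open scoped ENNReal

lemma eventually_const_mul_rpow_le_mul_rpow {β α : ℝ} (hβα : β < α) (K : ℝ) {ε : ℝ}
    (hε : 0 < ε) : ∀ᶠ x : ℝ in atTop, K * x ^ β ≤ ε * x ^ α := by
  filter_upwards [(tendsto_rpow_atTop (sub_pos.2 hβα)).eventually_ge_atTop (K / ε),
    eventually_gt_atTop 0] with x hx hx0
  calc K * x ^ β = K / ε * x ^ β * ε := by field_simp
    _ ≤ x ^ (α - β) * x ^ β * ε := by gcongr
    _ = ε * x ^ α := by rw [← rpow_add hx0, sub_add_cancel, mul_comm]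

lemma eventually_rpow_mul_exp_sub_rpow_le_exp_neg {D κ α ε : ℝ} (hD : 0 ≤ D) (hκ : 0 ≤ κ)
    (hα : 1 < α) (hκα : κ < α) (hε : 0 < ε) :
    ∀ᶠ x : ℝ in atTop, (x + 5) ^ D * exp ((x + 5) ^ κ - ε * x ^ α) ≤ exp (-x) := by
  set β := max κ 1
  filter_upwards [eventually_const_mul_rpow_le_mul_rpow (max_lt hκα hα) (2 * D + 2 ^ κ + 1) hε,
    eventually_ge_atTop 5] with x hK hx5
  have hx1 : 1 ≤ x := by linarith
  have hxβ : x ≤ x ^ β := self_le_rpow_of_one_le hx1 (le_max_right _ _)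
  have hκβ : x ^ κ ≤ x ^ β := rpow_le_rpow_of_exponent_le hx1 (le_max_left _ _)
  have hlog : log (x + 5) ≤ 2 * x ^ β := by linarith [log_le_self (by linarith : (0 : ℝ) ≤ x + 5)]
  have hpow : (x + 5) ^ κ ≤ 2 ^ κ * x ^ β :=
    calc (x + 5) ^ κ ≤ (2 * x) ^ κ := by gcongr; linarith
      _ = 2 ^ κ * x ^ κ := mul_rpow (by norm_num) (by linarith)
      _ ≤ 2 ^ κ * x ^ β := by gcongr
  rw [rpow_def_of_pos (by linarith), ← exp_add, exp_le_exp]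
  linarith [mul_le_mul_of_nonneg_left hlog hD]

lemma summable_rpow_mul_exp_sub_rpow {D κ α ε : ℝ} (hD : 0 ≤ D) (hκ : 0 ≤ κ) (hα : 1 < α)
    (hκα : κ < α) (hε : 0 < ε) :
    Summable fun k : ℕ => ((k : ℝ) + 5) ^ D * exp (((k : ℝ) + 5) ^ κ - ε * (k : ℝ) ^ α) := by
  refine .of_norm_bounded_eventually_nat summable_exp_neg_nat ?_
  filter_upwards [tendsto_natCast_atTop_atTop.eventually
    (eventually_rpow_mul_exp_sub_rpow_le_exp_neg hD hκ hα hκα hε)] with k hk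
  rwa [norm_of_nonneg (by positivity)]

section

variable {X : Type*} [MetricSpace X]

noncomputable def maximalFunction [MeasurableSpace X] (μ : Measure X) (g : X → ℝ≥0∞) (x : X) :
    ℝ≥0∞ :=
  ⨆ (ρ : ℝ) (_ : 0 < ρ), (μ (ball x ρ))⁻¹ * ∫⁻ z in ball x ρ, g z ∂μ

-- The `k`-th annulus `B(y, (k+1)r) \ B(y, kr)`, written as a fibre of `⌊d(·, y) / r⌋₊` so that
-- disjointness and covering are automatic.
def annulus (y : X) (r : ℝ) (k : ℕ) : Set X := {z | ⌊dist z y / r⌋₊ = k}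

lemma mem_annulus {y z : X} {r : ℝ} {k : ℕ} (hr : 0 < r) :
    z ∈ annulus y r k ↔ k * r ≤ dist z y ∧ dist z y < (k + 1) * r := by
  rw [annulus, Set.mem_ofPred_eq, Nat.floor_eq_iff (by positivity), le_div_iff₀ hr,
    div_lt_iff₀ hr]

lemma annulus_subset_ball {y : X} {r : ℝ} (hr : 0 < r) (k : ℕ) :
    annulus y r k ⊆ ball y ((k + 1) * r) :=
  fun _ hz => ((mem_annulus hr).1 hz).2

variable [MeasurableSpace X] {μ : Measure X}

lemma lintegral_eq_tsum_annulus [OpensMeasurableSpace X] (g : X → ℝ≥0∞) (y : X) (r : ℝ) :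
    ∫⁻ z, g z ∂μ = ∑' k, ∫⁻ z in annulus y r k, g z ∂μ := by
  have hφ : Measurable fun z => ⌊dist z y / r⌋₊ :=
    ((continuous_id.dist continuous_const).measurable.div_const r).nat_floor
  rw [← lintegral_iUnion (s := annulus y r) (fun k => hφ (measurableSet_singleton k))
      (pairwise_disjoint_fiber _),
    show ⋃ k, annulus y r k = Set.univ from Set.iUnion_eq_univ_iff.2 fun z => ⟨_, rfl⟩,
    Measure.restrict_univ]

lemma setLIntegral_ball_le_maximalFunction_mul (g : X → ℝ≥0∞) (x : X) {ρ : ℝ} (hρ : 0 < ρ)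
    (hfin : μ (ball x ρ) ≠ ∞) :
    ∫⁻ z in ball x ρ, g z ∂μ ≤ maximalFunction μ g x * μ (ball x ρ) := by
  rcases eq_or_ne (μ (ball x ρ)) 0 with h0 | h0
  · simp [setLIntegral_measure_zero _ _ h0]
  rw [mul_comm, ← ENNReal.inv_mul_le_iff h0 hfin]
  exact le_iSup₂_of_le (f := fun ρ (_ : 0 < ρ) => (μ (ball x ρ))⁻¹ * ∫⁻ z in ball x ρ, g z ∂μ)
    ρ hρ le_rfl

lemma setLIntegral_ball_le_maximalFunction_mul_ball (g : X → ℝ≥0∞) {x y : X} {ρ δ : ℝ}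
    (hxy : dist y x ≤ δ) (hρ : 0 < ρ + δ) (hfin : μ (ball x (ρ + δ)) ≠ ∞) :
    ∫⁻ z in ball y ρ, g z ∂μ ≤ maximalFunction μ g x * μ (ball y (ρ + 2 * δ)) :=
  calc ∫⁻ z in ball y ρ, g z ∂μ ≤ ∫⁻ z in ball x (ρ + δ), g z ∂μ :=
        lintegral_mono_set (ball_subset_ball' (by linarith))
    _ ≤ maximalFunction μ g x * μ (ball x (ρ + δ)) :=
        setLIntegral_ball_le_maximalFunction_mul g x hρ hfin
    _ ≤ maximalFunction μ g x * μ (ball y (ρ + 2 * δ)) := by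
        gcongr
        exact ball_subset_ball' (by rw [dist_comm]; linarith)

def HasVolumeGrowth (μ : Measure X) (D κ : ℝ) : Prop :=
  ∀ (x : X) (τ r : ℝ), 1 ≤ τ → 0 < r →
    μ (ball x (τ * r)) ≤ ENNReal.ofReal (D * τ ^ D * exp (τ ^ κ + r ^ κ)) * μ (ball x r)

def HasGaussianUpperBound (μ : Measure X) (p : ℝ → X → X → ℝ) (m κ A c₁ c₂ : ℝ) : Prop :=
  ∀ (s : ℝ) (y z : X), 0 < s → s ≤ 2 →
    p s y z ≤ A * exp (-c₁ * (dist y z ^ m / s) ^ (1 / (m - 1)) + c₂ * s ^ (κ / m)) /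
      (μ (ball y (s ^ (1 / m)))).toReal

lemma HasVolumeGrowth.measure_ball_le {D κ : ℝ} (h : HasVolumeGrowth μ D κ) (hD : 0 ≤ D)
    (hκ : 0 ≤ κ) (x : X) {τ r : ℝ} (hτ : 1 ≤ τ) (hr : 0 < r) (hr1 : r ≤ 1) :
    μ (ball x (τ * r)) ≤ ENNReal.ofReal (D * τ ^ D * exp (τ ^ κ + 1)) * μ (ball x r) := by
  refine (h x τ r hτ hr).trans ?_
  gcongr
  exact rpow_le_one hr.le hr1 hκ

lemma rpow_div_two_rpow_le_of_mul_le {m k r d : ℝ} (hm : 1 < m) (hk : 0 ≤ k) (hr : 0 < r)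
    (hkrd : k * r ≤ d) :
    k ^ (m / (m - 1)) / 2 ^ (1 / (m - 1)) ≤ (d ^ m / (2 * r ^ m)) ^ (1 / (m - 1)) := by
  have hkm : k ^ m / 2 ≤ d ^ m / (2 * r ^ m) := by
    rw [le_div_iff₀ (by positivity)]
    calc k ^ m / 2 * (2 * r ^ m) = (k * r) ^ m := by rw [mul_rpow hk hr.le]; ring
      _ ≤ d ^ m := by gcongr
  calc k ^ (m / (m - 1)) / 2 ^ (1 / (m - 1)) = (k ^ m / 2) ^ (1 / (m - 1)) := by
        rw [div_rpow (by positivity) (by norm_num), ← rpow_mul hk, mul_one_div]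
    _ ≤ (d ^ m / (2 * r ^ m)) ^ (1 / (m - 1)) := by gcongr

lemma le_two_mul_rpow_rpow_inv {m r : ℝ} (hm : 0 < m) (hr : 0 ≤ r) :
    r ≤ (2 * r ^ m) ^ (1 / m) := by
  rw [mul_rpow (by norm_num) (by positivity), ← rpow_mul hr, mul_one_div_cancel hm.ne', rpow_one]
  exact le_mul_of_one_le_left hr (one_le_rpow one_le_two (by positivity))

lemma HasGaussianUpperBound.ofReal_le_of_mem_annulus {p : ℝ → X → X → ℝ} {m κ A c₁ c₂ : ℝ}
    (hUB : HasGaussianUpperBound μ p m κ A c₁ c₂) (hm : 1 < m) (hκ : 0 ≤ κ) (hA : 0 ≤ A)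
    (hc₁ : 0 ≤ c₁) (hc₂ : 0 ≤ c₂) {y z : X} {r : ℝ} {k : ℕ} (hr : 0 < r) (hr1 : r ≤ 1)
    (hW : μ (ball y r) ≠ 0) (hV : μ (ball y ((2 * r ^ m) ^ (1 / m))) ≠ ∞)
    (hz : z ∈ annulus y r k) :
    ENNReal.ofReal (p (2 * r ^ m) y z) ≤
      ENNReal.ofReal (A * exp (c₂ * 2 ^ (κ / m) - c₁ / 2 ^ (1 / (m - 1)) * k ^ (m / (m - 1)))) /
        μ (ball y r) := by
  set s := 2 * r ^ m
  have hs : 0 < s := by positivity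
  have hs2 : s ≤ 2 := by linarith [rpow_le_one hr.le hr1 (by linarith : 0 ≤ m)]
  have hWV : μ (ball y r) ≤ μ (ball y (s ^ (1 / m))) :=
    measure_mono (ball_subset_ball (le_two_mul_rpow_rpow_inv (by linarith) hr.le))
  have hWfin : μ (ball y r) ≠ ∞ := ne_top_of_le_ne_top hV hWV
  have hWpos : 0 < (μ (ball y r)).toReal := ENNReal.toReal_pos hW hWfin
  have hdecay : c₁ / 2 ^ (1 / (m - 1)) * k ^ (m / (m - 1)) ≤
      c₁ * (dist y z ^ m / s) ^ (1 / (m - 1)) := by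
    rw [div_mul_eq_mul_div, mul_div_assoc]
    gcongr
    refine rpow_div_two_rpow_le_of_mul_le hm k.cast_nonneg hr ?_
    rw [dist_comm]
    exact ((mem_annulus hr).1 hz).1
  have hsκ : s ^ (κ / m) ≤ 2 ^ (κ / m) := by gcongr
  calc ENNReal.ofReal (p s y z)
      ≤ ENNReal.ofReal (A * exp (c₂ * 2 ^ (κ / m) - c₁ / 2 ^ (1 / (m - 1)) * k ^ (m / (m - 1))) /
          (μ (ball y r)).toReal) := by
        refine ENNReal.ofReal_le_ofReal ((hUB s y z hs hs2).trans ?_)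
        gcongr A * exp ?_ / ?_
        · linarith [mul_le_mul_of_nonneg_left hsκ hc₂]
        · exact ENNReal.toReal_mono hV hWV
    _ = _ := by rw [ENNReal.ofReal_div_of_pos hWpos, ENNReal.ofReal_toReal hWfin]

lemma setLIntegral_annulus_kernel_mul_le {p : ℝ → X → X → ℝ} {m D κ A c₁ c₂ : ℝ}
    (hμ : ∀ (x : X) (r : ℝ), 0 < r → 0 < μ (ball x r) ∧ μ (ball x r) < ⊤)
    (hVD : HasVolumeGrowth μ D κ) (hUB : HasGaussianUpperBound μ p m κ A c₁ c₂) (hm : 1 < m)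
    (hD : 0 ≤ D) (hκ : 0 ≤ κ) (hA : 0 ≤ A) (hc₁ : 0 ≤ c₁) (hc₂ : 0 ≤ c₂) {f : X → ℝ}
    (hf : Measurable f) (hf0 : ∀ z, 0 ≤ f z) {x' y : X} {r : ℝ} (hr : 0 < r) (hr1 : r ≤ 1)
    (hyx' : dist y x' ≤ 2 * r) (k : ℕ) :
    ∫⁻ z in annulus y r k, ENNReal.ofReal (p (2 * r ^ m) y z * f z) ∂μ ≤
      ENNReal.ofReal (A * D * exp (c₂ * 2 ^ (κ / m) + 1)) *
        ENNReal.ofReal (((k : ℝ) + 5) ^ D *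
          exp (((k : ℝ) + 5) ^ κ - c₁ / 2 ^ (1 / (m - 1)) * (k : ℝ) ^ (m / (m - 1)))) *
        maximalFunction μ (fun z => ENNReal.ofReal (f z)) x' := by
  set e := c₁ / 2 ^ (1 / (m - 1)) * (k : ℝ) ^ (m / (m - 1))
  set β := ENNReal.ofReal (A * exp (c₂ * 2 ^ (κ / m) - e))
  set G := ENNReal.ofReal (D * ((k : ℝ) + 5) ^ D * exp (((k : ℝ) + 5) ^ κ + 1))
  set W := μ (ball y r)
  set M := maximalFunction μ (fun z => ENNReal.ofReal (f z)) x'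
  obtain ⟨hW0, hWfin⟩ := hμ y r hr
  have hkernel : ∀ z ∈ annulus y r k, ENNReal.ofReal (p (2 * r ^ m) y z) ≤ β / W :=
    fun z hz => hUB.ofReal_le_of_mem_annulus hm hκ hA hc₁ hc₂ hr hr1 hW0.ne'
      (hμ _ _ (by positivity)).2.ne hz
  calc ∫⁻ z in annulus y r k, ENNReal.ofReal (p (2 * r ^ m) y z * f z) ∂μ
      = ∫⁻ z in annulus y r k, ENNReal.ofReal (p (2 * r ^ m) y z) * ENNReal.ofReal (f z) ∂μ :=
        lintegral_congr fun z => ENNReal.ofReal_mul' (hf0 z)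
    _ ≤ ∫⁻ z in annulus y r k, β / W * ENNReal.ofReal (f z) ∂μ :=
        setLIntegral_mono (by fun_prop) fun z hz => mul_le_mul_left (hkernel z hz) _
    _ = β / W * ∫⁻ z in annulus y r k, ENNReal.ofReal (f z) ∂μ :=
        lintegral_const_mul _ hf.ennreal_ofReal
    _ ≤ β / W * ∫⁻ z in ball y ((k + 1) * r), ENNReal.ofReal (f z) ∂μ := by
        gcongr
        exact annulus_subset_ball hr k
    _ ≤ β / W * (M * μ (ball y ((k + 1) * r + 2 * (2 * r)))) := by
        gcongr
        exact setLIntegral_ball_le_maximalFunction_mul_ball _ hyx' (by positivity)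
          (hμ _ _ (by positivity)).2.ne
    _ ≤ β / W * (M * (G * W)) := by
        gcongr
        rw [show (k + 1) * r + 2 * (2 * r) = ((k : ℝ) + 5) * r by ring]
        exact hVD.measure_ball_le hD hκ y (by linarith [k.cast_nonneg (α := ℝ)]) hr hr1
    _ = β / W * W * G * M := by ring
    _ = _ := by
        rw [ENNReal.div_mul_cancel hW0.ne' hWfin.ne, ← ENNReal.ofReal_mul (by positivity),
          ← ENNReal.ofReal_mul (by positivity)]
        congr 2
        have hexp : exp (c₂ * 2 ^ (κ / m) - e) * exp (((k : ℝ) + 5) ^ κ + 1) =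
            exp (c₂ * 2 ^ (κ / m) + 1) * exp (((k : ℝ) + 5) ^ κ - e) := by
          rw [← exp_add, ← exp_add]; ring_nf
        linear_combination (A * D * ((k : ℝ) + 5) ^ D) * hexp

end

theorem stmt_8_general
    {X : Type*} [MetricSpace X] [MeasurableSpace X] [BorelSpace X]
    (μ : Measure X)
    (hμ : ∀ (x : X) (r : ℝ), 0 < r → 0 < μ (ball x r) ∧ μ (ball x r) < ⊤)
    (m D κ : ℝ) (hm : 2 ≤ m) (hD : 1 ≤ D) (hκ0 : 0 ≤ κ) (hκ : κ < m / (m - 1))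
    (hVD : ∀ (x : X) (τ r : ℝ), 1 ≤ τ → 0 < r →
      μ (ball x (τ * r)) ≤
        ENNReal.ofReal (D * τ ^ D * Real.exp (τ ^ κ + r ^ κ)) * μ (ball x r))
    (p : ℝ → X → X → ℝ)
    (A c₁ c₂ : ℝ) (hA : 0 < A) (hc₁ : 0 < c₁) (hc₂ : 0 < c₂)
    (hUB : ∀ (s : ℝ) (y z : X), 0 < s → s ≤ 2 →
      p s y z ≤ A *
        Real.exp (-c₁ * (dist y z ^ m / s) ^ (1 / (m - 1)) + c₂ * s ^ (κ / m)) /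
        (μ (ball y (s ^ (1 / m)))).toReal) :
    ∃ C : ℝ, 0 < C ∧ ∀ (x₀ : X) (r : ℝ), 0 < r → r ≤ 1 →
      ∀ f : X → ℝ, Measurable f → (∀ z, 0 ≤ f z) →
        ∀ y x' : X, y ∈ ball x₀ r → x' ∈ ball x₀ r →
          (∫⁻ z, ENNReal.ofReal (p (2 * r ^ m) y z * f z) ∂μ) ≤
            ENNReal.ofReal C *
              ⨆ (ρ : ℝ) (_ : 0 < ρ),
                (μ (ball x' ρ))⁻¹ * ∫⁻ z in ball x' ρ, ENNReal.ofReal (f z) ∂μ := by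
  have hm1 : 1 < m := by linarith
  have hα : 1 < m / (m - 1) := (one_lt_div (by linarith)).2 (by linarith)
  set K := A * D * exp (c₂ * 2 ^ (κ / m) + 1)
  set a : ℕ → ℝ := fun k => ((k : ℝ) + 5) ^ D *
    exp (((k : ℝ) + 5) ^ κ - c₁ / 2 ^ (1 / (m - 1)) * (k : ℝ) ^ (m / (m - 1)))
  have ha : Summable a := summable_rpow_mul_exp_sub_rpow (by linarith) hκ0 hα hκ (by positivity)
  have ha0 : ∀ k, 0 ≤ a k := fun k => by positivity
  refine ⟨K * ∑' k, a k, mul_pos (by positivity) (ha.tsum_pos ha0 0 (by positivity)), ?_⟩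
  intro x₀ r hr hr1 f hf hf0 y x' hy hx'
  have hyx' : dist y x' ≤ 2 * r := by
    linarith [dist_triangle_right y x' x₀, mem_ball.1 hy, mem_ball.1 hx']
  calc ∫⁻ z, ENNReal.ofReal (p (2 * r ^ m) y z * f z) ∂μ
      = ∑' k, ∫⁻ z in annulus y r k, ENNReal.ofReal (p (2 * r ^ m) y z * f z) ∂μ :=
        lintegral_eq_tsum_annulus _ y r
    _ ≤ ∑' k, ENNReal.ofReal K * ENNReal.ofReal (a k) *
          maximalFunction μ (fun z => ENNReal.ofReal (f z)) x' :=
        ENNReal.tsum_le_tsum fun k => setLIntegral_annulus_kernel_mul_le hμ hVD hUB hm1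
          (by linarith) hκ0 hA.le hc₁.le hc₂.le hf hf0 hr hr1 hyx' k
    _ = ENNReal.ofReal (K * ∑' k, a k) * maximalFunction μ (fun z => ENNReal.ofReal (f z)) x' := by
        rw [ENNReal.tsum_mul_right, ENNReal.tsum_mul_left, ← ENNReal.ofReal_tsum_of_nonneg ha0 ha,
          ← ENNReal.ofReal_mul (by positivity)]

/-- The maximal-function estimate (3.7) in the proof of Theorem 3.1:
`sup_{B} P⁰_{2t} f ≲ inf_{B} M(f)` for balls `B = B(x₀,r)` of radius `r ≤ 1` and `t = r^m`. -/
theorem stmt_8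
    {X : Type*} [MetricSpace X] [MeasurableSpace X] [BorelSpace X]
    (μ : Measure X)
    (hμ : ∀ (x : X) (r : ℝ), 0 < r → 0 < μ (ball x r) ∧ μ (ball x r) < ⊤)
    (m D κ : ℝ) (hm : 2 ≤ m) (hD : 1 ≤ D) (hκ0 : 0 ≤ κ) (hκ : κ < m / (m - 1))
    (hVD : ∀ (x : X) (τ r : ℝ), 1 ≤ τ → 0 < r →
      μ (ball x (τ * r)) ≤
        ENNReal.ofReal (D * τ ^ D * Real.exp (τ ^ κ + r ^ κ)) * μ (ball x r))
    (p : ℝ → X → X → ℝ)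
    (hp_nonneg : ∀ (t : ℝ) (x y : X), 0 < t → 0 ≤ p t x y)
    (hp_meas : Measurable fun q : ℝ × X × X => p q.1 q.2.1 q.2.2)
    (A c₁ c₂ : ℝ) (hA : 0 < A) (hc₁ : 0 < c₁) (hc₂ : 0 < c₂)
    (hUB : ∀ (s : ℝ) (y z : X), 0 < s → s ≤ 2 →
      p s y z ≤ A *
        Real.exp (-c₁ * (dist y z ^ m / s) ^ (1 / (m - 1)) + c₂ * s ^ (κ / m)) /
        (μ (ball y (s ^ (1 / m)))).toReal) :
    ∃ C : ℝ, 0 < C ∧ ∀ (x₀ : X) (r : ℝ), 0 < r → r ≤ 1 →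
      ∀ f : X → ℝ, Measurable f → (∀ z, 0 ≤ f z) →
        ∀ y x' : X, y ∈ ball x₀ r → x' ∈ ball x₀ r →
          (∫⁻ z, ENNReal.ofReal (p (2 * r ^ m) y z * f z) ∂μ) ≤
            ENNReal.ofReal C *
              ⨆ (ρ : ℝ) (_ : 0 < ρ),
                (μ (ball x' ρ))⁻¹ * ∫⁻ z in ball x' ρ, ENNReal.ofReal (f z) ∂μ :=
  stmt_8_general μ hμ m D κ hm hD hκ0 hκ hVD p A c₁ c₂ hA hc₁ hc₂ hUB
end

section
/- Let (X,d) be a metric space and μ a Borel measure on X, finite and positive on balls; write V(x,r)=μ(B(x,r)). Fix m≥2, D≥1 and κ∈[0,m/(m−1)), and assume condition (II.2): V(x,τr) ≤ D τ^D V(x,r) exp(τ^κ + r^κ) for all x∈X, τ≥1, r>0. Let p:(0,∞)×X×X→[0,∞) be measurable, symmetric, and suppose there are constants A, c₁, c₂>0 such that p_s(x,y) ≤ A·V(y,s^{1/m})^{−1}·exp(−c₁ (d(x,y)^m/s)^{1/(m−1)} + c₂ s^{κ/m}) for all s>0 and x,y∈X. Then there exist constants C, c′, c″>0 such that for every ball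 B=B(x₀,r₀), every measurable b: X→[0,∞) supported in B with ∫_X b dμ < ∞, and every s>0, ∫_{X∖B(x₀,2r₀)} ( ∫_B p_{2s}(x,y) b(y) dμ(y) )^{1/2} dμ(x) ≤ C · exp(−c′ (r₀^m/s)^{1/(m−1)} + c″ s^{κ/m}) · ( (∫_X b dμ) · sup_{y∈B} V(y,(2s)^{1/m}) )^{1/2}. -/
/-!
Write `R = (2s)^(1/m)` and `β = m/(m-1)`, so that `(d^m / 2s)^(1/(m-1)) = (d/R)^β` and `κ < β`.
For `x ∉ B(x₀, 2r₀)` and `y ∈ B(x₀, r₀)` we have `d(x, y) ≥ d(x, x₀)/2`, and (II.2) with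
`τ = 1 + 2r₀/R` bounds every `V(z, R)`, `z ∈ B(x₀, r₀)`, by `exp (c (r₀/R)^β + R^κ) V(y, R)`:
since `κ < β`, the factor `D τ^D exp τ^κ` is dominated by `exp (c (τ - 1)^β)` for any `c > 0`.
So the kernel is at most a Gaussian in `d(x, x₀)` divided by `sup_{z ∈ B} V(z, R)`, half of the
Gaussian decay paying for the volume comparison. After taking square roots it remains to
integrate `exp (-c (d(x, x₀)/R)^β)` over `X`; covering `X` by the balls `B(x₀, (1 + j)R)` and
applying (II.2) to each of them shows that this is `≲ exp (R^κ) V(x₀, R)`, for the same reason.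
-/

open MeasureTheory Metric Real

theorem exists_mul_rpow_le_mul_rpow_add {a θ β ε : ℝ} (ha : 0 ≤ a) (hθ : 0 ≤ θ) (hθβ : θ < β)
    (hε : 0 < ε) : ∃ C, ∀ t, 0 ≤ t → a * t ^ θ ≤ ε * t ^ β + C := by
  set T := max 1 ((ε / (a + 1)) ^ (θ - β)⁻¹)
  refine ⟨a * T ^ θ, fun t ht => ?_⟩
  have hεt : 0 ≤ ε * t ^ β := by positivity
  rcases le_total t T with htT | hTt
  · linarith [mul_le_mul_of_nonneg_left (rpow_le_rpow ht htT hθ) ha]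
  · have ht0 : 0 < t := (zero_lt_one.trans_le (le_max_left _ _)).trans_le hTt
    have hdecay : t ^ (θ - β) ≤ ε / (a + 1) := calc
      t ^ (θ - β) ≤ ((ε / (a + 1)) ^ (θ - β)⁻¹) ^ (θ - β) :=
        rpow_le_rpow_of_nonpos (by positivity) ((le_max_right _ _).trans hTt) (by linarith)
      _ = ε / (a + 1) := by
        rw [← rpow_mul (by positivity), inv_mul_cancel₀ (by linarith), rpow_one]
    have : a * t ^ θ ≤ ε * t ^ β := calc
      a * t ^ θ ≤ (a + 1) * (t ^ (θ - β) * t ^ β) := by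
        rw [← rpow_add ht0, sub_add_cancel]; nlinarith [rpow_nonneg ht θ]
      _ ≤ (a + 1) * (ε / (a + 1) * t ^ β) := by gcongr
      _ = ε * t ^ β := by field_simp
    linarith [show 0 ≤ a * T ^ θ by positivity]

theorem one_add_rpow_le {u κ : ℝ} (hu : 0 ≤ u) (hκ : 0 ≤ κ) :
    (1 + u) ^ κ ≤ 2 ^ κ * (1 + u ^ κ) := by
  rcases le_total u 1 with h | h
  · calc (1 + u) ^ κ ≤ 2 ^ κ := rpow_le_rpow (by positivity) (by linarith) hκ
      _ ≤ 2 ^ κ * (1 + u ^ κ) :=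
        le_mul_of_one_le_right (by positivity) (by linarith [rpow_nonneg hu κ])
  · calc (1 + u) ^ κ ≤ (2 * u) ^ κ := rpow_le_rpow (by positivity) (by linarith) hκ
      _ = 2 ^ κ * u ^ κ := mul_rpow zero_le_two hu
      _ ≤ 2 ^ κ * (1 + u ^ κ) := by gcongr; linarith

theorem exists_one_add_rpow_mul_exp_le {a κ β c : ℝ} (ha : 0 ≤ a) (hκ : 0 ≤ κ) (hκβ : κ < β)
    (hβ : 1 < β) (hc : 0 < c) :
    ∃ C > 0, ∀ u, 0 ≤ u → (1 + u) ^ a * exp ((1 + u) ^ κ) ≤ C * exp (c * u ^ β) := by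
  obtain ⟨C₁, hC₁⟩ := exists_mul_rpow_le_mul_rpow_add ha zero_le_one hβ (half_pos hc)
  obtain ⟨C₂, hC₂⟩ :=
    exists_mul_rpow_le_mul_rpow_add (rpow_nonneg zero_le_two κ) hκ hκβ (half_pos hc)
  refine ⟨exp (C₁ + C₂ + 2 ^ κ), exp_pos _, fun u hu => ?_⟩
  have hlog : log (1 + u) ≤ u := by linarith [log_le_sub_one_of_pos (by linarith : 0 < 1 + u)]
  have h₁ := hC₁ u hu
  rw [rpow_one] at h₁
  rw [rpow_def_of_pos (by linarith : (0 : ℝ) < 1 + u) a, ← exp_add, ← exp_add, exp_le_exp]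
  nlinarith [one_add_rpow_le hu hκ, mul_le_mul_of_nonneg_left hlog ha, hC₂ u hu]

theorem exists_exp_neg_rpow_mul_le_geometric {D κ β c : ℝ} (hD : 0 < D) (hκ : 0 ≤ κ)
    (hκβ : κ < β) (hβ : 1 < β) (hc : 0 < c) :
    ∃ M > 0, ∀ j : ℕ,
      exp (-c * (j : ℝ) ^ β) * (D * (1 + (j : ℝ)) ^ D * exp ((1 + (j : ℝ)) ^ κ)) ≤
        M * exp (-(c / 2)) ^ j := by
  obtain ⟨C, hC, hgrowth⟩ := exists_one_add_rpow_mul_exp_le hD.le hκ hκβ hβ (half_pos hc)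
  refine ⟨D * C, by positivity, fun j => ?_⟩
  have hj : (j : ℝ) ≤ (j : ℝ) ^ β := by
    rcases Nat.eq_zero_or_pos j with rfl | hj
    · simp [zero_rpow (by linarith : β ≠ 0)]
    · exact self_le_rpow_of_one_le (by exact_mod_cast hj) hβ.le
  calc exp (-c * (j : ℝ) ^ β) * (D * (1 + (j : ℝ)) ^ D * exp ((1 + (j : ℝ)) ^ κ))
      ≤ exp (-c * (j : ℝ) ^ β) * (D * (C * exp (c / 2 * (j : ℝ) ^ β))) := by
        rw [mul_assoc D]; gcongr ?_ * (D * ?_); exact hgrowth j j.cast_nonneg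
    _ = D * C * exp (-(c / 2) * (j : ℝ) ^ β) := by
        rw [show -(c / 2) * (j : ℝ) ^ β = -c * (j : ℝ) ^ β + c / 2 * (j : ℝ) ^ β by ring, exp_add]
        ring
    _ ≤ D * C * exp (-(c / 2)) ^ j := by
        rw [← exp_nat_mul]; gcongr D * C * ?_; exact exp_le_exp.2 (by nlinarith)

theorem ofReal_exp_neg_rpow_le_tsum_indicator {X : Type*} [PseudoMetricSpace X] {β c R : ℝ}
    (hβ : 0 ≤ β) (hc : 0 ≤ c) (hR : 0 < R) (x₀ x : X) :
    ENNReal.ofReal (exp (-c * (dist x x₀ / R) ^ β)) ≤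
      ∑' j : ℕ, (ball x₀ ((1 + j) * R)).indicator
        (fun _ => ENNReal.ofReal (exp (-c * (j : ℝ) ^ β))) x := by
  set ρ := dist x x₀ / R
  have hρ : 0 ≤ ρ := by positivity
  refine le_trans ?_ (ENNReal.le_tsum ⌊ρ⌋₊)
  have hx : x ∈ ball x₀ ((1 + ⌊ρ⌋₊) * R) := by
    rw [mem_ball, ← div_lt_iff₀ hR, add_comm]
    exact Nat.lt_floor_add_one ρ
  rw [Set.indicator_of_mem hx]
  have := rpow_le_rpow (Nat.cast_nonneg _) (Nat.floor_le hρ) hβ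
  exact ENNReal.ofReal_le_ofReal (exp_le_exp.2 (by nlinarith))

theorem neg_mul_rpow_dist_le_of_far {X : Type*} [PseudoMetricSpace X] {β c R r₀ : ℝ}
    (hβ : 0 ≤ β) (hc : 0 ≤ c) (hR : 0 < R) {x₀ x y : X} (hx : x ∉ ball x₀ (2 * r₀))
    (hy : y ∈ ball x₀ r₀) :
    -c * (dist x y / R) ^ β ≤ -(c / 2 ^ β) * (dist x x₀ / R) ^ β := by
  rw [mem_ball, not_lt] at hx
  have hfar : dist x x₀ / R / 2 ≤ dist x y / R := by
    rw [div_right_comm]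
    gcongr
    linarith [dist_triangle x y x₀, mem_ball.1 hy]
  have := rpow_le_rpow (by positivity) hfar hβ
  rw [div_rpow (by positivity) zero_le_two] at this
  rw [neg_mul, neg_mul, neg_le_neg_iff, div_mul_eq_mul_div, mul_div_assoc]
  exact mul_le_mul_of_nonneg_left this hc

theorem ofReal_kernel_le_div_of_far {X : Type*} [PseudoMetricSpace X] [MeasurableSpace X]
    {μ : Measure X} {k : X → X → ℝ} {A c₁ c₂ C c β κ R r₀ : ℝ} {V : ENNReal} {x₀ x y : X}
    (hA : 0 ≤ A) (hc₁ : 0 ≤ c₁) (hβ : 0 ≤ β) (hR : 0 < R) (hμ₀ : 0 < μ (ball y R))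
    (hμ : μ (ball y R) < ⊤) (hV₀ : V ≠ 0) (hV : V ≠ ⊤)
    (hk : k x y ≤ A * exp (-c₁ * (dist x y / R) ^ β + c₂ * R ^ κ) / (μ (ball y R)).toReal)
    (hVy : V ≤ ENNReal.ofReal (C * exp (c * (r₀ / R) ^ β + R ^ κ)) * μ (ball y R))
    (hx : x ∉ ball x₀ (2 * r₀)) (hy : y ∈ ball x₀ r₀) :
    ENNReal.ofReal (k x y) ≤
      ENNReal.ofReal (A * C * exp (-(c₁ / 2 ^ β) * (dist x x₀ / R) ^ β + c * (r₀ / R) ^ β +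
        (c₂ + 1) * R ^ κ)) / V := by
  have hinv : (μ (ball y R))⁻¹ ≤ ENNReal.ofReal (C * exp (c * (r₀ / R) ^ β + R ^ κ)) / V := by
    rw [ENNReal.le_div_iff_mul_le (Or.inl hV₀) (Or.inl hV)]
    calc (μ (ball y R))⁻¹ * V
        ≤ (μ (ball y R))⁻¹ * (ENNReal.ofReal (C * exp (c * (r₀ / R) ^ β + R ^ κ)) *
            μ (ball y R)) := by gcongr
      _ = _ := by rw [mul_comm, mul_assoc, ENNReal.mul_inv_cancel hμ₀.ne' hμ.ne, mul_one]
  calc ENNReal.ofReal (k x y)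
      ≤ ENNReal.ofReal (A * exp (-c₁ * (dist x y / R) ^ β + c₂ * R ^ κ)) / μ (ball y R) := by
        rw [← ENNReal.ofReal_toReal hμ.ne,
          ← ENNReal.ofReal_div_of_pos (ENNReal.toReal_pos hμ₀.ne' hμ.ne)]
        exact ENNReal.ofReal_le_ofReal hk
    _ ≤ ENNReal.ofReal (A * exp (-(c₁ / 2 ^ β) * (dist x x₀ / R) ^ β + c₂ * R ^ κ)) *
          (ENNReal.ofReal (C * exp (c * (r₀ / R) ^ β + R ^ κ)) / V) := by
        rw [div_eq_mul_inv]
        gcongr ENNReal.ofReal (_ * exp (?_ + _)) * ?_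
        exact neg_mul_rpow_dist_le_of_far hβ hc₁ hR hx hy
    _ = _ := by
        rw [← mul_div_assoc, ← ENNReal.ofReal_mul (by positivity)]
        congr 2
        rw [show -(c₁ / 2 ^ β) * (dist x x₀ / R) ^ β + c * (r₀ / R) ^ β + (c₂ + 1) * R ^ κ =
          (-(c₁ / 2 ^ β) * (dist x x₀ / R) ^ β + c₂ * R ^ κ) + (c * (r₀ / R) ^ β + R ^ κ) by ring,
          exp_add (-(c₁ / 2 ^ β) * (dist x x₀ / R) ^ β + c₂ * R ^ κ)]
        ring

theorem ENNReal.rpow_half_div_mul_self {a b : ENNReal} (hb₀ : b ≠ 0) (hb : b ≠ ⊤) :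
    (a / b) ^ (1 / 2 : ℝ) * b = (a * b) ^ (1 / 2 : ℝ) := by
  have h₀ : (0 : ℝ) ≤ 1 / 2 := by norm_num
  calc (a / b) ^ (1 / 2 : ℝ) * b = (a / b) ^ (1 / 2 : ℝ) * (b ^ (1 / 2 : ℝ) * b ^ (1 / 2 : ℝ)) := by
        rw [← ENNReal.rpow_add _ _ hb₀ hb]; norm_num
    _ = (a / b * b) ^ (1 / 2 : ℝ) * b ^ (1 / 2 : ℝ) := by
        rw [ENNReal.mul_rpow_of_nonneg _ _ h₀, mul_assoc]
    _ = (a * b) ^ (1 / 2 : ℝ) := by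
        rw [ENNReal.div_mul_cancel hb₀ hb, ENNReal.mul_rpow_of_nonneg _ _ h₀]

theorem lintegral_rpow_half_le_of_kernel_le {X : Type*} [MeasurableSpace X] {μ : Measure X}
    {s t : Set X} (hs : MeasurableSet s) (ht : MeasurableSet t) {k : X → X → ℝ} {b g : X → ℝ}
    {K L : ℝ} {V : ENNReal} (hK : 0 ≤ K) (hg : Measurable g) (hg₀ : ∀ x, 0 ≤ g x)
    (hb : ∀ y, 0 ≤ b y) (hV₀ : V ≠ 0) (hV : V ≠ ⊤)
    (hk : ∀ x ∈ t, ∀ y ∈ s, ENNReal.ofReal (k x y) ≤ ENNReal.ofReal ((K * g x) ^ 2) / V)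
    (hgint : ∫⁻ x, ENNReal.ofReal (g x) ∂μ ≤ ENNReal.ofReal L * V) :
    ∫⁻ x in t, (∫⁻ y in s, ENNReal.ofReal (k x y * b y) ∂μ) ^ (1 / 2 : ℝ) ∂μ ≤
      ENNReal.ofReal (K * L) * ((∫⁻ y, ENNReal.ofReal (b y) ∂μ) * V) ^ (1 / 2 : ℝ) := by
  set I := ∫⁻ y, ENNReal.ofReal (b y) ∂μ
  have hinner : ∀ x ∈ t, (∫⁻ y in s, ENNReal.ofReal (k x y * b y) ∂μ) ^ (1 / 2 : ℝ) ≤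
      ENNReal.ofReal K * ENNReal.ofReal (g x) * (I / V) ^ (1 / 2 : ℝ) := by
    intro x hx
    have hint : ∫⁻ y in s, ENNReal.ofReal (k x y * b y) ∂μ ≤
        ENNReal.ofReal ((K * g x) ^ 2) * (I / V) := calc
      _ ≤ ∫⁻ y in s, ENNReal.ofReal ((K * g x) ^ 2) / V * ENNReal.ofReal (b y) ∂μ :=
          setLIntegral_mono' hs fun y hy => by
            rw [ENNReal.ofReal_mul' (hb y)]; gcongr; exact hk x hx y hy
      _ = ENNReal.ofReal ((K * g x) ^ 2) / V * ∫⁻ y in s, ENNReal.ofReal (b y) ∂μ :=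
          lintegral_const_mul' _ _ (ENNReal.div_ne_top ENNReal.ofReal_ne_top hV₀)
      _ ≤ ENNReal.ofReal ((K * g x) ^ 2) / V * I := by gcongr; exact setLIntegral_le_lintegral _ _
      _ = ENNReal.ofReal ((K * g x) ^ 2) * (I / V) := by simp only [div_eq_mul_inv]; ring
    calc _ ≤ (ENNReal.ofReal ((K * g x) ^ 2) * (I / V)) ^ (1 / 2 : ℝ) := by gcongr
      _ = _ := by
        rw [ENNReal.mul_rpow_of_nonneg _ _ (by norm_num),
          ENNReal.ofReal_rpow_of_nonneg (by positivity) (by norm_num), ← sqrt_eq_rpow,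
          sqrt_sq (mul_nonneg hK (hg₀ x)), ENNReal.ofReal_mul hK]
  calc _ ≤ ∫⁻ x in t, ENNReal.ofReal K * ENNReal.ofReal (g x) * (I / V) ^ (1 / 2 : ℝ) ∂μ :=
        setLIntegral_mono' ht hinner
    _ ≤ ∫⁻ x, ENNReal.ofReal K * ENNReal.ofReal (g x) * (I / V) ^ (1 / 2 : ℝ) ∂μ :=
        setLIntegral_le_lintegral _ _
    _ = ENNReal.ofReal K * (∫⁻ x, ENNReal.ofReal (g x) ∂μ) * (I / V) ^ (1 / 2 : ℝ) := by
        rw [lintegral_mul_const _ (by fun_prop), lintegral_const_mul' _ _ ENNReal.ofReal_ne_top]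
    _ ≤ ENNReal.ofReal K * (ENNReal.ofReal L * V) * (I / V) ^ (1 / 2 : ℝ) := by gcongr
    _ = ENNReal.ofReal (K * L) * ((I / V) ^ (1 / 2 : ℝ) * V) := by
        rw [ENNReal.ofReal_mul hK]; ring
    _ = _ := by rw [ENNReal.rpow_half_div_mul_self hV₀ hV]

/-- Condition (II.2). -/
def ExpVolumeDoubling {X : Type*} [PseudoMetricSpace X] [MeasurableSpace X] (μ : Measure X)
    (D κ : ℝ) : Prop :=
  ∀ (x : X) (τ r : ℝ), 1 ≤ τ → 0 < r →
    μ (ball x (τ * r)) ≤ ENNReal.ofReal (D * τ ^ D * exp (τ ^ κ + r ^ κ)) * μ (ball x r)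

namespace ExpVolumeDoubling

variable {X : Type*} [PseudoMetricSpace X] [MeasurableSpace X] {μ : Measure X} {D κ β : ℝ}

theorem iSup_measure_ball_le (h : ExpVolumeDoubling μ D κ) {x₀ y : X} {r₀ R : ℝ} (hR : 0 < R)
    (hy : y ∈ ball x₀ r₀) :
    ⨆ z ∈ ball x₀ r₀, μ (ball z R) ≤
      ENNReal.ofReal (D * (1 + 2 * (r₀ / R)) ^ D * exp ((1 + 2 * (r₀ / R)) ^ κ + R ^ κ)) *
        μ (ball y R) := by
  have hr₀ : 0 ≤ r₀ := dist_nonneg.trans (mem_ball.1 hy).le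
  refine iSup₂_le fun z hz => ?_
  refine (measure_mono (ball_subset_ball' ?_)).trans
    (h y _ R (le_add_of_nonneg_right (by positivity)) hR)
  rw [add_mul, one_mul, mul_assoc, div_mul_cancel₀ _ hR.ne']
  linarith [dist_triangle_right z y x₀, mem_ball.1 hz, mem_ball.1 hy]

theorem exists_iSup_measure_ball_le (h : ExpVolumeDoubling μ D κ) (hD : 0 < D) (hκ : 0 ≤ κ)
    (hκβ : κ < β) (hβ : 1 < β) {c : ℝ} (hc : 0 < c) :
    ∃ C > 0, ∀ (x₀ y : X) (r₀ R : ℝ), 0 < R → y ∈ ball x₀ r₀ →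
      ⨆ z ∈ ball x₀ r₀, μ (ball z R) ≤
        ENNReal.ofReal (C * exp (c * (r₀ / R) ^ β + R ^ κ)) * μ (ball y R) := by
  obtain ⟨C, hC, hgrowth⟩ :=
    exists_one_add_rpow_mul_exp_le hD.le hκ hκβ hβ (c := c / 2 ^ β) (by positivity)
  refine ⟨D * C, by positivity, fun x₀ y r₀ R hR hy => (h.iSup_measure_ball_le hR hy).trans ?_⟩
  have hv : 0 ≤ r₀ / R := div_nonneg (dist_nonneg.trans (mem_ball.1 hy).le) hR.le
  have hscale : c / 2 ^ β * (2 * (r₀ / R)) ^ β = c * (r₀ / R) ^ β := by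
    rw [mul_rpow zero_le_two hv]; field_simp
  gcongr ENNReal.ofReal ?_ * _
  calc D * (1 + 2 * (r₀ / R)) ^ D * exp ((1 + 2 * (r₀ / R)) ^ κ + R ^ κ)
      = D * ((1 + 2 * (r₀ / R)) ^ D * exp ((1 + 2 * (r₀ / R)) ^ κ)) * exp (R ^ κ) := by
        rw [exp_add]; ring
    _ ≤ D * (C * exp (c * (r₀ / R) ^ β)) * exp (R ^ κ) := by
        rw [← hscale]; gcongr D * ?_ * _; exact hgrowth _ (by positivity)
    _ = D * C * exp (c * (r₀ / R) ^ β + R ^ κ) := by rw [exp_add]; ring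

variable [OpensMeasurableSpace X]

theorem exists_lintegral_exp_neg_rpow_le (h : ExpVolumeDoubling μ D κ) (hD : 0 < D)
    (hκ : 0 ≤ κ) (hκβ : κ < β) (hβ : 1 < β) {c : ℝ} (hc : 0 < c) :
    ∃ C > 0, ∀ (x₀ : X) (R : ℝ), 0 < R →
      ∫⁻ x, ENNReal.ofReal (exp (-c * (dist x x₀ / R) ^ β)) ∂μ ≤
        ENNReal.ofReal (C * exp (R ^ κ)) * μ (ball x₀ R) := by
  obtain ⟨M, hM, hweight⟩ := exists_exp_neg_rpow_mul_le_geometric hD hκ hκβ hβ hc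
  set q := exp (-(c / 2))
  have hq : q < 1 := exp_lt_one_iff.2 (by linarith)
  refine ⟨M * (1 - q)⁻¹, by have := sub_pos.2 hq; positivity, fun x₀ R hR => ?_⟩
  have hsum : Summable fun j : ℕ => M * q ^ j * exp (R ^ κ) :=
    ((summable_geometric_of_lt_one (exp_pos _).le hq).mul_left M).mul_right _
  calc ∫⁻ x, ENNReal.ofReal (exp (-c * (dist x x₀ / R) ^ β)) ∂μ
      ≤ ∫⁻ x, ∑' j : ℕ, (ball x₀ ((1 + j) * R)).indicator
          (fun _ => ENNReal.ofReal (exp (-c * (j : ℝ) ^ β))) x ∂μ :=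
        lintegral_mono fun x => ofReal_exp_neg_rpow_le_tsum_indicator (by linarith) hc.le hR x₀ x
    _ = ∑' j : ℕ, ENNReal.ofReal (exp (-c * (j : ℝ) ^ β)) * μ (ball x₀ ((1 + j) * R)) := by
        rw [lintegral_tsum fun j => (measurable_const.indicator measurableSet_ball).aemeasurable]
        simp only [lintegral_indicator_const measurableSet_ball]
    _ ≤ ∑' j : ℕ, ENNReal.ofReal (M * q ^ j * exp (R ^ κ)) * μ (ball x₀ R) := by
        refine ENNReal.tsum_le_tsum fun j => ?_
        calc _ ≤ ENNReal.ofReal (exp (-c * (j : ℝ) ^ β)) *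
              (ENNReal.ofReal (D * (1 + j) ^ D * exp ((1 + j) ^ κ + R ^ κ)) * μ (ball x₀ R)) := by
              gcongr; exact h x₀ _ R (by simp) hR
          _ = ENNReal.ofReal (exp (-c * (j : ℝ) ^ β) *
                (D * (1 + j) ^ D * exp ((1 + j) ^ κ)) * exp (R ^ κ)) * μ (ball x₀ R) := by
              rw [exp_add, ← mul_assoc, ← ENNReal.ofReal_mul (exp_pos _).le]
              congr 2
              ring
          _ ≤ _ := by gcongr ENNReal.ofReal (?_ * _) * _; exact hweight j
    _ = ENNReal.ofReal (M * (1 - q)⁻¹ * exp (R ^ κ)) * μ (ball x₀ R) := by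
        rw [ENNReal.tsum_mul_right, ← ENNReal.ofReal_tsum_of_nonneg (fun j => by positivity) hsum,
          tsum_mul_right, tsum_mul_left, tsum_geometric_of_lt_one (exp_pos _).le hq]

theorem exists_lintegral_compl_ball_rpow_half_le (h : ExpVolumeDoubling μ D κ)
    (hμ : ∀ (x : X) (r : ℝ), 0 < r → 0 < μ (ball x r) ∧ μ (ball x r) < ⊤)
    (hD : 0 < D) (hκ : 0 ≤ κ) (hκβ : κ < β) (hβ : 1 < β) {A c₁ c₂ : ℝ} (hA : 0 < A)
    (hc₁ : 0 < c₁) (hc₂ : 0 ≤ c₂) :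
    ∃ C c' c'' : ℝ, 0 < C ∧ 0 < c' ∧ 0 < c'' ∧ ∀ R : ℝ, 0 < R → ∀ k : X → X → ℝ,
      (∀ x y, k x y ≤ A * exp (-c₁ * (dist x y / R) ^ β + c₂ * R ^ κ) / (μ (ball y R)).toReal) →
      ∀ (x₀ : X) (r₀ : ℝ), 0 < r₀ → ∀ b : X → ℝ, (∀ y, 0 ≤ b y) →
        ∫⁻ x in (ball x₀ (2 * r₀))ᶜ,
            (∫⁻ y in ball x₀ r₀, ENNReal.ofReal (k x y * b y) ∂μ) ^ (1 / 2 : ℝ) ∂μ ≤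
          ENNReal.ofReal (C * exp (-c' * (r₀ / R) ^ β + c'' * R ^ κ)) *
            ((∫⁻ y, ENNReal.ofReal (b y) ∂μ) * ⨆ y ∈ ball x₀ r₀, μ (ball y R)) ^ (1 / 2 : ℝ) := by
  have hβ₀ : 0 ≤ β := by linarith
  set c₃ := c₁ / 2 ^ β
  have hc₃ : 0 < c₃ := by positivity
  obtain ⟨C₅, hC₅, hgauss⟩ := h.exists_lintegral_exp_neg_rpow_le hD hκ hκβ hβ (c := c₃ / 4)
    (by positivity)
  obtain ⟨C₆, hC₆, hcomp⟩ := h.exists_iSup_measure_ball_le hD hκ hκβ hβ (c := c₃ / 4)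
    (by positivity)
  refine ⟨√(A * C₆) * C₅, c₃ / 8, (c₂ + 3) / 2, by positivity, by positivity, by positivity,
    fun R hR k hk x₀ r₀ hr₀ b hb => ?_⟩
  set V := ⨆ y ∈ ball x₀ r₀, μ (ball y R)
  have hx₀V : μ (ball x₀ R) ≤ V := le_iSup₂ (f := fun y _ => μ (ball y R)) x₀ (mem_ball_self hr₀)
  have hV₀ : V ≠ 0 := ((hμ x₀ R hR).1.trans_le hx₀V).ne'
  have hV : V ≠ ⊤ := by
    refine ((iSup₂_le fun y hy => measure_mono (ball_subset_ball' ?_)).trans_lt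
      (hμ x₀ (R + r₀) (by positivity)).2).ne
    linarith [mem_ball.1 hy]
  set K := √(A * C₆) * exp (-(c₃ / 8) * (r₀ / R) ^ β + (c₂ + 1) / 2 * R ^ κ)
  set g : X → ℝ := fun x => exp (-(c₃ / 4) * (dist x x₀ / R) ^ β)
  have hkernel : ∀ x ∈ (ball x₀ (2 * r₀))ᶜ, ∀ y ∈ ball x₀ r₀,
      ENNReal.ofReal (k x y) ≤ ENNReal.ofReal ((K * g x) ^ 2) / V := by
    intro x hx y hy
    refine (ofReal_kernel_le_div_of_far hA.le hc₁.le hβ₀ hR (hμ y R hR).1 (hμ y R hR).2 hV₀ hV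
      (hk x y) (hcomp x₀ y r₀ R hR hy) hx hy).trans ?_
    have hv : r₀ / R ≤ dist x x₀ / R := by
      rw [Set.mem_compl_iff, mem_ball, not_lt] at hx
      exact div_le_div_of_nonneg_right (by linarith) hR.le
    have hvβ := rpow_le_rpow (by positivity) hv hβ₀
    have hsq : (K * g x) ^ 2 = A * C₆ * exp (2 * (-(c₃ / 8) * (r₀ / R) ^ β +
        (c₂ + 1) / 2 * R ^ κ) + 2 * (-(c₃ / 4) * (dist x x₀ / R) ^ β)) := by
      rw [mul_pow, mul_pow, sq_sqrt (by positivity), ← exp_nat_mul, ← exp_nat_mul, mul_assoc,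
        ← exp_add]
      push_cast; rfl
    rw [hsq]
    gcongr ENNReal.ofReal (A * C₆ * ?_) / _
    exact exp_le_exp.2 (by nlinarith)
  refine (lintegral_rpow_half_le_of_kernel_le measurableSet_ball measurableSet_ball.compl
    (by positivity) (by fun_prop) (fun x => (exp_pos _).le) hb hV₀ hV hkernel
    ((hgauss x₀ R hR).trans (by gcongr))).trans_eq ?_
  congr 2
  rw [show (c₂ + 3) / 2 * R ^ κ = (c₂ + 1) / 2 * R ^ κ + R ^ κ by ring, ← add_assoc, exp_add]
  ring

end ExpVolumeDoubling

theorem rpow_div_rpow_one_div_sub_one_eq {d s m : ℝ} (hd : 0 ≤ d) (hs : 0 < s) (hm : 1 < m) :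
    (d ^ m / s) ^ (1 / (m - 1)) = (d / s ^ (1 / m)) ^ (m / (m - 1)) := by
  rw [div_rpow (rpow_nonneg hd _) hs.le, div_rpow hd (rpow_nonneg hs.le _), ← rpow_mul hd,
    ← rpow_mul hs.le]
  congr 2 <;> field_simp

theorem stmt_10_general
    {X : Type*} [MetricSpace X] [MeasurableSpace X] [BorelSpace X]
    (μ : Measure X)
    (hμ : ∀ (x : X) (r : ℝ), 0 < r → 0 < μ (ball x r) ∧ μ (ball x r) < ⊤)
    (m D κ : ℝ) (hm : 2 ≤ m) (hD : 1 ≤ D) (hκ0 : 0 ≤ κ) (hκ : κ < m / (m - 1))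
    (hVD : ∀ (x : X) (τ r : ℝ), 1 ≤ τ → 0 < r →
      μ (ball x (τ * r)) ≤
        ENNReal.ofReal (D * τ ^ D * Real.exp (τ ^ κ + r ^ κ)) * μ (ball x r))
    (p : ℝ → X → X → ℝ)
    (A c₁ c₂ : ℝ) (hA : 0 < A) (hc₁ : 0 < c₁) (hc₂ : 0 < c₂)
    (hUB : ∀ (s : ℝ) (x y : X), 0 < s →
      p s x y ≤ A *
        Real.exp (-c₁ * (dist x y ^ m / s) ^ (1 / (m - 1)) + c₂ * s ^ (κ / m)) /
        (μ (ball y (s ^ (1 / m)))).toReal) :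
    ∃ C c' c'' : ℝ, 0 < C ∧ 0 < c' ∧ 0 < c'' ∧
      ∀ (x₀ : X) (r₀ : ℝ), 0 < r₀ →
        ∀ b : X → ℝ, Measurable b → (∀ y, 0 ≤ b y) →
          (∀ y, y ∉ ball x₀ r₀ → b y = 0) →
          (∫⁻ y, ENNReal.ofReal (b y) ∂μ) < ⊤ →
          ∀ s : ℝ, 0 < s →
            (∫⁻ x in (ball x₀ (2 * r₀))ᶜ,
                (∫⁻ y in ball x₀ r₀, ENNReal.ofReal (p (2 * s) x y * b y) ∂μ) ^
                  ((1 : ℝ) / 2) ∂μ) ≤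
              ENNReal.ofReal
                  (C * Real.exp (-c' * (r₀ ^ m / s) ^ (1 / (m - 1)) + c'' * s ^ (κ / m))) *
                ((∫⁻ y, ENNReal.ofReal (b y) ∂μ) *
                    ⨆ y ∈ ball x₀ r₀, μ (ball y ((2 * s) ^ (1 / m)))) ^ ((1 : ℝ) / 2) := by
  have hm₁ : 1 < m := by linarith
  have hβ : 1 < m / (m - 1) := by rw [lt_div_iff₀ (by linarith)]; linarith
  obtain ⟨C, c', c'', hC, hc', hc'', hmain⟩ :=
    ExpVolumeDoubling.exists_lintegral_compl_ball_rpow_half_le hVD hμ (by linarith) hκ0 hκ hβ hA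
      hc₁ hc₂.le
  refine ⟨C, c' / 2 ^ (1 / (m - 1)), c'' * 2 ^ (κ / m), hC, by positivity, by positivity,
    fun x₀ r₀ hr₀ b _ hb _ _ s hs => ?_⟩
  set R := (2 * s) ^ (1 / m)
  have hRκ : R ^ κ = (2 * s) ^ (κ / m) := by rw [← rpow_mul (by positivity)]; ring_nf
  have hkernel : ∀ x y, p (2 * s) x y ≤
      A * exp (-c₁ * (dist x y / R) ^ (m / (m - 1)) + c₂ * R ^ κ) / (μ (ball y R)).toReal := by
    intro x y
    rw [← rpow_div_rpow_one_div_sub_one_eq dist_nonneg (by positivity) hm₁, hRκ]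
    exact hUB (2 * s) x y (by positivity)
  convert hmain R (by positivity) (p (2 * s)) hkernel x₀ r₀ hr₀ b hb using 4
  rw [← rpow_div_rpow_one_div_sub_one_eq hr₀.le (by positivity) hm₁, hRκ, mul_rpow zero_le_two hs.le,
    mul_comm 2 s, ← div_div, div_rpow (by positivity) zero_le_two]
  congr 1
  ring

/-- The integrated off-ball estimate (3.11) in the proof of Theorem 3.1. -/
theorem stmt_10
    {X : Type*} [MetricSpace X] [MeasurableSpace X] [BorelSpace X]
    (μ : Measure X)
    (hμ : ∀ (x : X) (r : ℝ), 0 < r → 0 < μ (ball x r) ∧ μ (ball x r) < ⊤)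
    (m D κ : ℝ) (hm : 2 ≤ m) (hD : 1 ≤ D) (hκ0 : 0 ≤ κ) (hκ : κ < m / (m - 1))
    (hVD : ∀ (x : X) (τ r : ℝ), 1 ≤ τ → 0 < r →
      μ (ball x (τ * r)) ≤
        ENNReal.ofReal (D * τ ^ D * Real.exp (τ ^ κ + r ^ κ)) * μ (ball x r))
    (p : ℝ → X → X → ℝ)
    (hp_nonneg : ∀ (t : ℝ) (x y : X), 0 < t → 0 ≤ p t x y)
    (hp_meas : Measurable fun q : ℝ × X × X => p q.1 q.2.1 q.2.2)
    (hp_symm : ∀ (t : ℝ) (x y : X), 0 < t → p t x y = p t y x)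
    (A c₁ c₂ : ℝ) (hA : 0 < A) (hc₁ : 0 < c₁) (hc₂ : 0 < c₂)
    (hUB : ∀ (s : ℝ) (x y : X), 0 < s →
      p s x y ≤ A *
        Real.exp (-c₁ * (dist x y ^ m / s) ^ (1 / (m - 1)) + c₂ * s ^ (κ / m)) /
        (μ (ball y (s ^ (1 / m)))).toReal) :
    ∃ C c' c'' : ℝ, 0 < C ∧ 0 < c' ∧ 0 < c'' ∧
      ∀ (x₀ : X) (r₀ : ℝ), 0 < r₀ →
        ∀ b : X → ℝ, Measurable b → (∀ y, 0 ≤ b y) →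
          (∀ y, y ∉ ball x₀ r₀ → b y = 0) →
          (∫⁻ y, ENNReal.ofReal (b y) ∂μ) < ⊤ →
          ∀ s : ℝ, 0 < s →
            (∫⁻ x in (ball x₀ (2 * r₀))ᶜ,
                (∫⁻ y in ball x₀ r₀, ENNReal.ofReal (p (2 * s) x y * b y) ∂μ) ^
                  ((1 : ℝ) / 2) ∂μ) ≤
              ENNReal.ofReal
                  (C * Real.exp (-c' * (r₀ ^ m / s) ^ (1 / (m - 1)) + c'' * s ^ (κ / m))) *
                ((∫⁻ y, ENNReal.ofReal (b y) ∂μ) *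
                    ⨆ y ∈ ball x₀ r₀, μ (ball y ((2 * s) ^ (1 / m)))) ^ ((1 : ℝ) / 2) :=
  stmt_10_general μ hμ m D κ hm hD hκ0 hκ hVD p A c₁ c₂ hA hc₁ hc₂ hUB
end

section
/- For every t>0, ∫_t^∞ ( (s−t)^{−1/2} − s^{−1/2} ) · ((1+√s)/√s) ds = ∫₀^∞ ( u^{−1/2} − (u+1)^{−1/2} ) · ( (u+1)^{−1/2} + √t ) du, and this integral is finite; moreover there is a constant C>0 with ∫_t^∞ ((s−t)^{−1/2} − s^{−1/2})((1+√s)/√s) ds ≤ C(1+√t) for all t>0. -/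
/-!
The substitution `s = t (u + 1)` turns the integral into
`∫₀^∞ (u^{-1/2} - (u+1)^{-1/2}) ((u+1)^{-1/2} + √t) du`. The second factor is at most
`1 + √t`, and the first is the derivative of `2 (√u - √(u+1))`, which vanishes at infinity and
equals `-2` at `0`, so it integrates to exactly `2`. Hence the integral is finite and at most
`2 (1 + √t)`.
-/

open MeasureTheory Real Set Filter Topology
open scoped ENNReal

noncomputable section

def k₂Integrand (t s : ℝ) : ℝ := (1 / √(s - t) - 1 / √s) * ((1 + √s) / √s)

def invSqrtGap (u : ℝ) : ℝ := 1 / √u - 1 / √(u + 1)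

end

theorem setLIntegral_Ioi_eq_setLIntegral_Ioi_zero_comp_affine (f : ℝ → ℝ≥0∞) (a : ℝ)
    {c : ℝ} (hc : 0 < c) :
    ∫⁻ s in Ioi a, f s = ∫⁻ u in Ioi 0, ENNReal.ofReal c * f (a + c * u) := by
  have himage : (fun u => a + c * u) '' Ioi 0 = Ioi a := by
    rw [← image_image (a + ·) (c * ·), image_mul_left_Ioi hc, image_const_add_Ioi]
    simp
  have hderiv (u : ℝ) : HasDerivWithinAt (fun u => a + c * u) c (Ioi 0) u := by
    simpa using ((hasDerivAt_id u).const_mul c).const_add a |>.hasDerivWithinAt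
  rw [← himage, lintegral_image_eq_lintegral_abs_deriv_mul measurableSet_Ioi
    (fun u _ => hderiv u) ((add_right_injective a).comp (mul_right_injective₀ hc.ne')).injOn,
    abs_of_pos hc]

theorem k₂Integrand_rescale {t u : ℝ} (ht : 0 < t) (hu : 0 < u) :
    t * k₂Integrand t (t + t * u) = invSqrtGap u * (1 / √(u + 1) + √t) := by
  have : 0 < √u := sqrt_pos.2 hu
  have : 0 < √(u + 1) := sqrt_pos.2 (by linarith)
  have : 0 < √t := sqrt_pos.2 ht
  rw [k₂Integrand, invSqrtGap, show t + t * u - t = t * u by ring,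
    show t + t * u = t * (u + 1) by ring, sqrt_mul ht.le, sqrt_mul ht.le]
  field_simp
  rw [sq_sqrt ht.le]

theorem invSqrtGap_nonneg {u : ℝ} (hu : 0 < u) : 0 ≤ invSqrtGap u :=
  sub_nonneg.2 <| one_div_le_one_div_of_le (sqrt_pos.2 hu) (sqrt_le_sqrt (by linarith))

theorem hasDerivAt_two_mul_sqrt_sub_sqrt_add_one {u : ℝ} (hu : 0 < u) :
    HasDerivAt (fun u => 2 * (√u - √(u + 1))) (invSqrtGap u) u := by
  have hu1 : 0 < u + 1 := by linarith
  refine (((hasDerivAt_id' u).sqrt hu.ne').sub (((hasDerivAt_id' u).add_const 1).sqrt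
    hu1.ne')).const_mul 2 |>.congr_deriv ?_
  have : 0 < √u := sqrt_pos.2 hu
  have : 0 < √(u + 1) := sqrt_pos.2 hu1
  rw [invSqrtGap]
  field_simp

theorem tendsto_two_mul_sqrt_sub_sqrt_add_one :
    Tendsto (fun u => 2 * (√u - √(u + 1))) atTop (𝓝 0) := by
  have hden : Tendsto (fun u => √u + √(u + 1)) atTop atTop :=
    tendsto_atTop_mono (fun u => le_add_of_nonneg_right (sqrt_nonneg _)) tendsto_sqrt_atTop
  have hlim := (hden.inv_tendsto_atTop.const_mul (-2 : ℝ))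
  rw [mul_zero] at hlim
  refine hlim.congr' ?_
  filter_upwards [eventually_ge_atTop 0] with u hu
  have hsum : 0 < √u + √(u + 1) := by
    have := sqrt_pos.2 (by linarith : 0 < u + 1); positivity
  have := sq_sqrt hu
  have := sq_sqrt (by linarith : 0 ≤ u + 1)
  simp only [Pi.inv_apply]
  field_simp
  nlinarith

theorem setLIntegral_invSqrtGap : ∫⁻ u in Ioi 0, ENNReal.ofReal (invSqrtGap u) = 2 := by
  have hcont : ContinuousWithinAt (fun u => 2 * (√u - √(u + 1))) (Ici 0) 0 := by
    fun_prop
  have hderiv := fun u (hu : u ∈ Ioi (0 : ℝ)) => hasDerivAt_two_mul_sqrt_sub_sqrt_add_one hu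
  have hnonneg := fun u (hu : u ∈ Ioi (0 : ℝ)) => invSqrtGap_nonneg hu
  have hlim := tendsto_two_mul_sqrt_sub_sqrt_add_one
  rw [← ofReal_integral_eq_lintegral_ofReal
      (integrableOn_Ioi_deriv_of_nonneg hcont hderiv hnonneg hlim)
      ((ae_restrict_iff' measurableSet_Ioi).2 (.of_forall hnonneg)),
    integral_Ioi_of_hasDerivAt_of_nonneg hcont hderiv hnonneg hlim]
  norm_num

theorem setLIntegral_k₂Integrand_eq {t : ℝ} (ht : 0 < t) :
    ∫⁻ s in Ioi t, ENNReal.ofReal (k₂Integrand t s) =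
      ∫⁻ u in Ioi 0, ENNReal.ofReal (invSqrtGap u * (1 / √(u + 1) + √t)) := by
  rw [setLIntegral_Ioi_eq_setLIntegral_Ioi_zero_comp_affine _ t ht]
  refine setLIntegral_congr_fun measurableSet_Ioi fun u hu => ?_
  rw [← ENNReal.ofReal_mul ht.le, k₂Integrand_rescale ht hu]

theorem setLIntegral_invSqrtGap_mul_le (t : ℝ) :
    ∫⁻ u in Ioi 0, ENNReal.ofReal (invSqrtGap u * (1 / √(u + 1) + √t)) ≤
      ENNReal.ofReal (2 * (1 + √t)) := by
  calc _ ≤ ∫⁻ u in Ioi 0, ENNReal.ofReal (1 + √t) * ENNReal.ofReal (invSqrtGap u) := by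
        refine setLIntegral_mono' measurableSet_Ioi fun u hu => ?_
        rw [← ENNReal.ofReal_mul (by positivity), mul_comm (1 + √t)]
        have : 1 / √(u + 1) ≤ 1 :=
          (div_le_one (sqrt_pos.2 (by linarith [mem_Ioi.1 hu]))).2
            (one_le_sqrt.2 (by linarith [mem_Ioi.1 hu]))
        gcongr
        exact invSqrtGap_nonneg hu
    _ = ENNReal.ofReal (2 * (1 + √t)) := by
        rw [lintegral_const_mul' _ _ ENNReal.ofReal_ne_top, setLIntegral_invSqrtGap,
          ← ENNReal.ofReal_ofNat 2, ← ENNReal.ofReal_mul (by positivity), mul_comm]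

/-- Change-of-variables identity (`s = t(u+1)`), finiteness, and the bound `C(1+√t)` for the
integral `K₂` in the proof of Theorem 3.1(2) (the case `ϑ = 0`, `a₁ = κ = 0`). -/
theorem stmt_13 :
    (∀ t : ℝ, 0 < t →
      (∫⁻ s in Set.Ioi t,
          ENNReal.ofReal ((1 / Real.sqrt (s - t) - 1 / Real.sqrt s) *
            ((1 + Real.sqrt s) / Real.sqrt s))) =
        (∫⁻ u in Set.Ioi (0 : ℝ),
          ENNReal.ofReal ((1 / Real.sqrt u - 1 / Real.sqrt (u + 1)) *
            (1 / Real.sqrt (u + 1) + Real.sqrt t))) ∧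
      (∫⁻ s in Set.Ioi t,
          ENNReal.ofReal ((1 / Real.sqrt (s - t) - 1 / Real.sqrt s) *
            ((1 + Real.sqrt s) / Real.sqrt s))) < ⊤) ∧
    ∃ C : ℝ, 0 < C ∧ ∀ t : ℝ, 0 < t →
      (∫⁻ s in Set.Ioi t,
          ENNReal.ofReal ((1 / Real.sqrt (s - t) - 1 / Real.sqrt s) *
            ((1 + Real.sqrt s) / Real.sqrt s))) ≤
        ENNReal.ofReal (C * (1 + Real.sqrt t)) := by
  have hbound (t : ℝ) (ht : 0 < t) :
      ∫⁻ s in Ioi t, ENNReal.ofReal (k₂Integrand t s) ≤ ENNReal.ofReal (2 * (1 + √t)) :=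
    (setLIntegral_k₂Integrand_eq ht).trans_le (setLIntegral_invSqrtGap_mul_le t)
  exact ⟨fun t ht => ⟨setLIntegral_k₂Integrand_eq ht,
    (hbound t ht).trans_lt ENNReal.ofReal_lt_top⟩, 2, two_pos, hbound⟩
end

section
/- Let (X,d) be a metric space and μ a Borel measure on X, finite and positive on balls; write V(x,r)=μ(B(x,r)). Fix m≥2, D≥1 and κ∈[0,m/(m−1)), and assume condition (II.2): V(x,τr) ≤ D τ^D V(x,r) exp(τ^κ + r^κ) for all x∈X, τ≥1, r>0. Then for every ε>0 there exists a constant C_ε>0 such that for all t∈(0,1], all s>0, and all x,y∈X with d(x,y) ≤ 2 t^{1/m}, V(x,(2s)^{1/m}) ≤ C_ε · V(y, s^{1/m}) · exp( ε (t/s)^{1/(m−1)} + s^{κ/m} ). -/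
/-!
The triangle inequality puts `B(x, (2s)^{1/m})` inside `B(y, τ s^{1/m})` with
`τ = 2^{1/m} + 2 w`, `w = (t/s)^{1/m}`, so (II.2) bounds the volume ratio by
`D τ^D exp (τ^κ + s^{κ/m})`. Now `τ^D exp (τ^κ) ≤ exp (O(1 + w + w^κ))`, and since
both `1` and `κ` are below `m/(m-1)`, this is at most
`C_ε exp (ε w^{m/(m-1)}) = C_ε exp (ε (t/s)^{1/(m-1)})`.
-/

open MeasureTheory Metric Real

-- For `w ≥ R` the affine term is at most `(a + b) w`, and `w ^ (p - q) ≥ (a + b) ^ q / δ`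
-- absorbs the rest; below `R` everything is bounded by the value at `R`.
lemma exists_add_mul_rpow_le_mul_rpow_add {p q a b δ : ℝ} (hq : 0 ≤ q) (hqp : q < p)
    (ha : 0 ≤ a) (hb : 0 ≤ b) (hδ : 0 < δ) :
    ∃ c : ℝ, ∀ w : ℝ, 0 ≤ w → (a + b * w) ^ q ≤ δ * w ^ p + c := by
  have hpq : 0 < p - q := sub_pos.mpr hqp
  set K := (a + b) ^ q / δ
  have hK : 0 ≤ K := by positivity
  set R := max 1 (K ^ (p - q)⁻¹)
  refine ⟨(a + b * R) ^ q, fun w hw => ?_⟩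
  rcases le_total w R with hwR | hRw
  · have : (a + b * w) ^ q ≤ (a + b * R) ^ q := by gcongr
    have : 0 ≤ δ * w ^ p := by positivity
    linarith
  · have hw1 : 1 ≤ w := (le_max_left _ _).trans hRw
    have hKw : K ≤ w ^ (p - q) :=
      calc K = (K ^ (p - q)⁻¹) ^ (p - q) := (rpow_inv_rpow hK hpq.ne').symm
        _ ≤ w ^ (p - q) := by gcongr; exact (le_max_right _ _).trans hRw
    have hpow : w ^ p = w ^ (p - q) * w ^ q := by
      rw [← rpow_add (by linarith)]; ring_nf
    have hc : 0 ≤ (a + b * R) ^ q := by positivity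
    calc (a + b * w) ^ q ≤ ((a + b) * w) ^ q := by gcongr; nlinarith
      _ = K * δ * w ^ q := by rw [mul_rpow (by positivity) hw, div_mul_cancel₀ _ hδ.ne']
      _ ≤ w ^ (p - q) * δ * w ^ q := by gcongr
      _ ≤ δ * w ^ p + (a + b * R) ^ q := by rw [hpow]; linarith

lemma rpow_le_exp_mul {x D : ℝ} (hx : 0 ≤ x) (hD : 0 ≤ D) : x ^ D ≤ exp (D * x) :=
  calc x ^ D ≤ |x ^ D| := le_abs_self _
    _ ≤ exp (log x * D) := abs_rpow_le_exp_log_mul x D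
    _ ≤ exp (D * x) := by rw [mul_comm]; gcongr; exact log_le_self hx

lemma exists_rpow_mul_exp_rpow_le_exp {p D κ a b ε : ℝ} (hp : 1 < p) (hD : 0 ≤ D)
    (hκ0 : 0 ≤ κ) (hκ : κ < p) (ha : 0 ≤ a) (hb : 0 ≤ b) (hε : 0 < ε) :
    ∃ c : ℝ, ∀ w : ℝ, 0 ≤ w →
      (a + b * w) ^ D * exp ((a + b * w) ^ κ) ≤ exp (c + ε * w ^ p) := by
  obtain ⟨c₁, h₁⟩ := exists_add_mul_rpow_le_mul_rpow_add zero_le_one hp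
    (mul_nonneg hD ha) (mul_nonneg hD hb) (half_pos hε)
  obtain ⟨c₂, h₂⟩ := exists_add_mul_rpow_le_mul_rpow_add hκ0 hκ ha hb (half_pos hε)
  refine ⟨c₁ + c₂, fun w hw => ?_⟩
  have h₁w := h₁ w hw
  rw [rpow_one] at h₁w
  calc (a + b * w) ^ D * exp ((a + b * w) ^ κ)
      ≤ exp (D * (a + b * w)) * exp ((a + b * w) ^ κ) := by
        gcongr; exact rpow_le_exp_mul (by positivity) hD
    _ = exp (D * a + D * b * w + (a + b * w) ^ κ) := by rw [← exp_add]; ring_nf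
    _ ≤ exp (c₁ + c₂ + ε * w ^ p) := exp_le_exp.mpr (by linarith [h₂ w hw])

theorem stmt_14_general
    {X : Type*} [MetricSpace X] [MeasurableSpace X]
    (μ : Measure X)
    (m D κ : ℝ) (hm : 2 ≤ m) (hD : 1 ≤ D) (hκ0 : 0 ≤ κ) (hκ : κ < m / (m - 1))
    (hVD : ∀ (x : X) (τ r : ℝ), 1 ≤ τ → 0 < r →
      μ (ball x (τ * r)) ≤
        ENNReal.ofReal (D * τ ^ D * Real.exp (τ ^ κ + r ^ κ)) * μ (ball x r)) :
    ∀ ε : ℝ, 0 < ε → ∃ C : ℝ, 0 < C ∧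
      ∀ (t s : ℝ) (x y : X), 0 < t → t ≤ 1 → 0 < s → dist x y ≤ 2 * t ^ (1 / m) →
        μ (ball x ((2 * s) ^ (1 / m))) ≤
          ENNReal.ofReal (C * Real.exp (ε * (t / s) ^ (1 / (m - 1)) + s ^ (κ / m))) *
            μ (ball y (s ^ (1 / m))) := by
  intro ε hε
  have hm1 : 0 < m - 1 := by linarith
  obtain ⟨c, hc⟩ := exists_rpow_mul_exp_rpow_le_exp (D := D)
    ((one_lt_div hm1).mpr (by linarith)) (by linarith) hκ0 hκ
    (rpow_nonneg zero_le_two (1 / m)) zero_le_two hε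
  refine ⟨D * exp c, by positivity, fun t s x y ht _ hs hxy => ?_⟩
  set w := (t / s) ^ (1 / m)
  set τ := 2 ^ (1 / m) + 2 * w
  have hw : 0 ≤ w := by positivity
  have hτ : 1 ≤ τ :=
    le_add_of_le_of_nonneg (one_le_rpow one_le_two (by positivity)) (by positivity)
  have hradius : (2 * s) ^ (1 / m) + 2 * t ^ (1 / m) = τ * s ^ (1 / m) := by
    simp only [τ, w]
    rw [mul_rpow zero_le_two hs.le, div_rpow ht.le hs.le]
    field_simp [(rpow_pos_of_pos hs (1 / m)).ne']
  have hwp : w ^ (m / (m - 1)) = (t / s) ^ (1 / (m - 1)) := by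
    rw [← rpow_mul (by positivity)]; congr 1; field_simp
  have hsκ : (s ^ (1 / m)) ^ κ = s ^ (κ / m) := by
    rw [← rpow_mul hs.le]; congr 1; ring
  have hfactor : D * τ ^ D * exp (τ ^ κ + (s ^ (1 / m)) ^ κ) ≤
      D * exp c * exp (ε * (t / s) ^ (1 / (m - 1)) + s ^ (κ / m)) :=
    calc D * τ ^ D * exp (τ ^ κ + (s ^ (1 / m)) ^ κ)
        = D * (τ ^ D * exp (τ ^ κ)) * exp (s ^ (κ / m)) := by rw [hsκ, exp_add]; ring
      _ ≤ D * exp (c + ε * w ^ (m / (m - 1))) * exp (s ^ (κ / m)) := by gcongr; exact hc w hw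
      _ = D * exp c * exp (ε * (t / s) ^ (1 / (m - 1)) + s ^ (κ / m)) := by
        rw [hwp, exp_add, exp_add]; ring
  calc μ (ball x ((2 * s) ^ (1 / m)))
      ≤ μ (ball y (τ * s ^ (1 / m))) :=
        measure_mono (ball_subset_ball' (by rw [← hradius]; linarith))
    _ ≤ ENNReal.ofReal (D * τ ^ D * exp (τ ^ κ + (s ^ (1 / m)) ^ κ)) *
          μ (ball y (s ^ (1 / m))) := hVD y τ _ hτ (by positivity)
    _ ≤ _ := by gcongr ?_ * _; exact ENNReal.ofReal_le_ofReal hfactor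

/-- The ball-comparison estimate used at the end of the proof of Theorem 3.1:
for `x, y` in a ball of radius `t^{1/m}` (so `dist x y ≤ 2 t^{1/m}`) and any `ε > 0`,
`V(x,(2s)^{1/m}) ≤ C_ε V(y,s^{1/m}) exp(ε (t/s)^{1/(m-1)} + s^{κ/m})`. -/
theorem stmt_14
    {X : Type*} [MetricSpace X] [MeasurableSpace X] [BorelSpace X]
    (μ : Measure X)
    (hμ : ∀ (x : X) (r : ℝ), 0 < r → 0 < μ (ball x r) ∧ μ (ball x r) < ⊤)
    (m D κ : ℝ) (hm : 2 ≤ m) (hD : 1 ≤ D) (hκ0 : 0 ≤ κ) (hκ : κ < m / (m - 1))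
    (hVD : ∀ (x : X) (τ r : ℝ), 1 ≤ τ → 0 < r →
      μ (ball x (τ * r)) ≤
        ENNReal.ofReal (D * τ ^ D * Real.exp (τ ^ κ + r ^ κ)) * μ (ball x r)) :
    ∀ ε : ℝ, 0 < ε → ∃ C : ℝ, 0 < C ∧
      ∀ (t s : ℝ) (x y : X), 0 < t → t ≤ 1 → 0 < s → dist x y ≤ 2 * t ^ (1 / m) →
        μ (ball x ((2 * s) ^ (1 / m))) ≤
          ENNReal.ofReal (C * Real.exp (ε * (t / s) ^ (1 / (m - 1)) + s ^ (κ / m))) *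
            μ (ball y (s ^ (1 / m))) :=
  stmt_14_general μ m D κ hm hD hκ0 hκ hVD
end
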